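/- arXiv:1409.8335 — 11 statements merged into one kernel-verified Lean document; each statement's English description precedes it below -/
import Mathlib

section
/- The collection WR of subsets of ω×ω generated by vertical lines {i}×ω and by sets G such that for every (i,j),(k,l) ∈ G either i > k+l or k > i+j is an ideal on ω×ω, i.e., it is closed under subsets and finite unions, contains all finite sets, and does not contain the whole set ω×ω. -/
open Set

/-- `I` is an ideal on `α`: closed under subsets and finite unions,
contains all finite sets, and is not all of `P(α)`. -/
def IsIdealOn {α : Type*} (I : Set (Set α)) : Prop :=
  (∀ A ∈ I, ∀ B : Set α, B ⊆ A → B ∈ I) ∧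
  (∀ A ∈ I, ∀ B ∈ I, A ∪ B ∈ I) ∧
  (∀ A : Set α, A.Finite → A ∈ I) ∧
  (Set.univ : Set α) ∉ I

/-- Generator of the first type of `WR`: a vertical line. -/
def WRgen1 (S : Set (ℕ × ℕ)) : Prop := ∃ i, S = {p : ℕ × ℕ | p.1 = i}

/-- Generator of the second type of `WR`. -/
def WRgen2 (S : Set (ℕ × ℕ)) : Prop :=
  ∀ p ∈ S, ∀ q ∈ S, p ≠ q → p.1 > q.1 + q.2 ∨ q.1 > p.1 + p.2

/-- The ideal `WR`: sets covered by finitely many generators. -/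
def WR : Set (Set (ℕ × ℕ)) :=
  {A | ∃ C : Finset (Set (ℕ × ℕ)), (∀ S ∈ C, WRgen1 S ∨ WRgen2 S) ∧ A ⊆ ⋃₀ ↑C}

/-- Generator of `ED↑`: a vertical line or the graph of a nondecreasing function. -/
def EDgen (S : Set (ℕ × ℕ)) : Prop :=
  (∃ i, S = {p : ℕ × ℕ | p.1 = i}) ∨
  (∃ f : ℕ → ℕ, Monotone f ∧ S = {p : ℕ × ℕ | p.2 = f p.1})

/-- The ideal `ED↑`. -/
def EDup : Set (Set (ℕ × ℕ)) :=
  {A | ∃ C : Finset (Set (ℕ × ℕ)), (∀ S ∈ C, EDgen S) ∧ A ⊆ ⋃₀ ↑C}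

/-- A tree of finite sequences: closed under taking prefixes. -/
def IsTree {α : Type*} (T : Set (List α)) : Prop :=
  ∀ s ∈ T, ∀ t : List α, t <+: s → t ∈ T

/-- `I` is weakly Ramsey: every (nonempty) tree all of whose ramifications
belong to the dual filter `I*` has a branch with `I`-positive range. -/
def WeaklyRamsey {α : Type*} (I : Set (Set α)) : Prop :=
  ∀ T : Set (List α), ([] : List α) ∈ T → IsTree T →
    (∀ s ∈ T, {x : α | s ++ [x] ∈ T}ᶜ ∈ I) →
    ∃ b : ℕ → α, (∀ k, (List.range k).map b ∈ T) ∧ Set.range b ∉ I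

/-- `(X n)` is a partition of `α`. -/
def IsPartition {α : Type*} (X : ℕ → Set α) : Prop :=
  (∀ m n, m ≠ n → Disjoint (X m) (X n)) ∧ (⋃ n, X n) = Set.univ

/-- `S` is a selector: it meets each piece in at most one point. -/
def IsSelector {α : Type*} (X : ℕ → Set α) (S : Set α) : Prop :=
  ∀ n, (S ∩ X n).Subsingleton

/-- Locally selective: every partition into sets from `I` has an `I`-positive selector. -/
def LocallySelective {α : Type*} (I : Set (Set α)) : Prop :=
  ∀ X : ℕ → Set α, IsPartition X → (∀ n, X n ∈ I) →
    ∃ S : Set α, IsSelector X S ∧ S ∉ I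

/-- Weakly selective. -/
def WeaklySelective {α : Type*} (I : Set (Set α)) : Prop :=
  ∀ X : ℕ → Set α, IsPartition X → {n | X n ∉ I}.Subsingleton →
    (∀ n, (⋃ m, ⋃ _ : n ≤ m, X m) ∉ I) →
    ∃ S : Set α, IsSelector X S ∧ S ∉ I

/-!
A generator of the second type meets every vertical line in at most one point, since two of its
points `(i, j) ≠ (i, l)` would need `i > i + l` or `i > i + j`. Finitely many generators therefore
cover only finitely many points of any vertical line that is not one of them, and such a line
exists; so they cannot cover `ω × ω`.
-/

section CoveredBy

variable {α : Type*}

def coveredBy (P : Set α → Prop) : Set (Set α) :=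
  {A | ∃ C : Finset (Set α), (∀ S ∈ C, P S) ∧ A ⊆ ⋃₀ ↑C}

variable {P : Set α → Prop}

lemma mem_coveredBy_of_subset {A B : Set α} (hA : A ∈ coveredBy P) (hBA : B ⊆ A) :
    B ∈ coveredBy P := by
  obtain ⟨C, hC, hAC⟩ := hA
  exact ⟨C, hC, hBA.trans hAC⟩

lemma union_mem_coveredBy {A B : Set α} (hA : A ∈ coveredBy P) (hB : B ∈ coveredBy P) :
    A ∪ B ∈ coveredBy P := by
  classical
  obtain ⟨C, hC, hAC⟩ := hA
  obtain ⟨D, hD, hBD⟩ := hB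
  refine ⟨C ∪ D, fun S hS => (Finset.mem_union.1 hS).elim (hC S) (hD S), ?_⟩
  rw [Finset.coe_union, sUnion_union]
  exact union_subset_union hAC hBD

lemma finite_mem_coveredBy (hP : ∀ a, ∃ S, P S ∧ a ∈ S) {A : Set α} (hA : A.Finite) :
    A ∈ coveredBy P := by
  classical
  choose cover hcover hmem using hP
  refine ⟨hA.toFinset.image cover, ?_, fun a ha => ?_⟩
  · simp only [Finset.mem_image]
    rintro _ ⟨a, -, rfl⟩
    exact hcover a
  · exact ⟨cover a, by simpa using ⟨a, ha, rfl⟩, hmem a⟩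

end CoveredBy

def column (i : ℕ) : Set (ℕ × ℕ) := {p | p.1 = i}

lemma column_injective : Function.Injective column := fun i k h => by
  simpa [column] using (Set.ext_iff.1 h (i, 0)).1 rfl

lemma column_infinite (i : ℕ) : (column i).Infinite :=
  infinite_of_injective_forall_mem (f := fun j => (i, j)) (fun _ _ h => (Prod.mk.inj h).2)
    fun _ => rfl

lemma WR_eq_coveredBy : WR = coveredBy (fun S => WRgen1 S ∨ WRgen2 S) := rfl

lemma WRgen2.inter_column_subsingleton {S : Set (ℕ × ℕ)} (hS : WRgen2 S) (i : ℕ) :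
    (S ∩ column i).Subsingleton := by
  rintro p ⟨hp, hpi⟩ q ⟨hq, hqi⟩
  by_contra hne
  simp only [column, mem_ofPred_eq] at hpi hqi
  rcases hS p hp q hq hne with h | h <;> omega

lemma inter_column_subsingleton_of_ne {S : Set (ℕ × ℕ)} (hS : WRgen1 S ∨ WRgen2 S) {i : ℕ}
    (hSi : S ≠ column i) : (S ∩ column i).Subsingleton := by
  rcases hS with ⟨k, rfl⟩ | hS
  · have hki : k ≠ i := fun h => hSi (h ▸ rfl)
    rintro p ⟨hpk, hpi⟩
    exact absurd (hpk.symm.trans hpi) hki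
  · exact hS.inter_column_subsingleton i

lemma univ_notMem_WR : (univ : Set (ℕ × ℕ)) ∉ WR := by
  rintro ⟨C, hC, hcover⟩
  obtain ⟨_, ⟨i, rfl⟩, hi⟩ :=
    (infinite_range_of_injective column_injective).exists_notMem_finset C
  have hfinite : (⋃ S ∈ C, S ∩ column i).Finite :=
    C.finite_toSet.biUnion fun S hS =>
      (inter_column_subsingleton_of_ne (hC S hS) (ne_of_mem_of_not_mem hS hi)).finite
  refine column_infinite i (hfinite.subset fun p hp => ?_)
  obtain ⟨S, hS, hpS⟩ := hcover (mem_univ p)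
  exact mem_biUnion hS ⟨hpS, hp⟩

theorem WR_isIdeal : IsIdealOn WR := by
  rw [IsIdealOn, WR_eq_coveredBy]
  exact ⟨fun A hA B hBA => mem_coveredBy_of_subset hA hBA,
    fun A hA B hB => union_mem_coveredBy hA hB,
    fun A hA => finite_mem_coveredBy (fun p => ⟨column p.1, Or.inl ⟨p.1, rfl⟩, rfl⟩) hA,
    univ_notMem_WR⟩
end

section
/- The ideal WR is a Σ⁰₂ (Fσ) subset of P(ω×ω) ≅ 2^(ω×ω): namely WR = {A : φ(A) < ∞} for the lower semicontinuous submeasure φ(A) = inf{|C| : A ⊆ ∪C and each member of C is a generator of the first or second type of WR}. -/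
open Set

/-- The covering-number submeasure for `WR`. -/
noncomputable def phi (A : Set (ℕ × ℕ)) : ℕ∞ :=
  sInf {m : ℕ∞ | ∃ C : Finset (Set (ℕ × ℕ)),
    (∀ S ∈ C, WRgen1 S ∨ WRgen2 S) ∧ A ⊆ ⋃₀ ↑C ∧ m = (C.card : ℕ∞)}

/-!
`phi A` is the least number of generators covering `A`, so it is a submeasure which is finite
exactly on `WR`. Everything else comes from compactness of `2^(ω×ω)`: the indicator functions of
generators form a closed set (a limit of vertical lines is a vertical line or empty, and the
second-type condition is a condition on pairs of points), so `m`-tuples of generators form a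
compact space, and if every finite part of `A` is covered by `m` generators then so is `A`.
Thus `phi A` is the supremum of `phi (A ∩ F)` over finite `F`, which gives lower
semicontinuity, and `{A | phi A ≤ m}` is an intersection of clopen sets, so `WR` is `Fσ`.
-/

open Filter Topology

lemma isClosed_setOf_inter_finset {X : Type*} (F : Finset X) (Q : Set X → Prop) :
    IsClosed {f : X → Bool | Q ({x | f x = true} ∩ F)} := by
  have : {f : X → Bool | Q ({x | f x = true} ∩ F)} =
      (F : Set X).domRestrict ⁻¹' {g | Q {x | ∃ h : x ∈ F, g ⟨x, h⟩ = true}} := by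
    ext f
    simp only [mem_ofPred_eq, mem_preimage, domRestrict_apply, exists_prop, and_comm]
    rfl
  rw [this]
  exact (isClosed_discrete _).preimage (Pi.continuous_domRestrict _)

noncomputable def coverNumber {X : Type*} (P : Set X → Prop) (A : Set X) : ℕ∞ :=
  sInf {m | ∃ C : Finset (Set X), (∀ S ∈ C, P S) ∧ A ⊆ ⋃₀ ↑C ∧ m = C.card}

namespace coverNumber

variable {X : Type*} {P : Set X → Prop} {A B : Set X}

lemma le_card {C : Finset (Set X)} (hC : ∀ S ∈ C, P S) (hA : A ⊆ ⋃₀ ↑C) :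
    coverNumber P A ≤ C.card :=
  sInf_le ⟨C, hC, hA, rfl⟩

lemma exists_cover_of_ne_top (h : coverNumber P A ≠ ⊤) :
    ∃ C : Finset (Set X), (∀ S ∈ C, P S) ∧ A ⊆ ⋃₀ ↑C ∧ coverNumber P A = C.card := by
  refine csInf_mem
    (s := {m : ℕ∞ | ∃ C : Finset (Set X), (∀ S ∈ C, P S) ∧ A ⊆ ⋃₀ ↑C ∧ m = C.card})
    (nonempty_iff_ne_empty.2 fun hno_cover => h ?_)
  rw [coverNumber, hno_cover, sInf_empty]

lemma lt_top_iff : coverNumber P A < ⊤ ↔ ∃ C : Finset (Set X), (∀ S ∈ C, P S) ∧ A ⊆ ⋃₀ ↑C := by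
  refine ⟨fun h => ?_, fun ⟨C, hC, hA⟩ => (le_card hC hA).trans_lt (ENat.natCast_lt_top _)⟩
  obtain ⟨C, hC, hA, -⟩ := exists_cover_of_ne_top h.ne
  exact ⟨C, hC, hA⟩

lemma mono (h : A ⊆ B) : coverNumber P A ≤ coverNumber P B :=
  le_sInf fun _ ⟨_, hC, hB, hm⟩ => hm ▸ le_card hC (h.trans hB)

lemma empty : coverNumber P ∅ = 0 :=
  nonpos_iff_eq_zero.1 <| by simpa using le_card (P := P) (C := ∅) (by simp) (empty_subset _)

lemma union_le (A B : Set X) : coverNumber P (A ∪ B) ≤ coverNumber P A + coverNumber P B := by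
  classical
  rcases eq_or_ne (coverNumber P A) ⊤ with hA | hA
  · simp [hA]
  rcases eq_or_ne (coverNumber P B) ⊤ with hB | hB
  · simp [hB]
  obtain ⟨C, hC, hAC, hCcard⟩ := exists_cover_of_ne_top hA
  obtain ⟨D, hD, hBD, hDcard⟩ := exists_cover_of_ne_top hB
  have hCD : ∀ S ∈ C ∪ D, P S := fun S hS => (Finset.mem_union.1 hS).elim (hC S) (hD S)
  have hcov : A ∪ B ⊆ ⋃₀ ↑(C ∪ D) := by
    rw [Finset.coe_union, sUnion_union]
    exact union_subset_union hAC hBD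
  calc coverNumber P (A ∪ B) ≤ (C ∪ D).card := le_card hCD hcov
    _ ≤ C.card + D.card := mod_cast Finset.card_union_le C D
    _ = coverNumber P A + coverNumber P B := by rw [hCcard, hDcard]

lemma le_coe_iff (hP : P ∅) {m : ℕ} :
    coverNumber P A ≤ m ↔ ∃ c : Fin m → Set X, (∀ k, P (c k)) ∧ A ⊆ ⋃ k, c k := by
  classical
  constructor
  · intro h
    obtain ⟨C, hC, hA, hcard⟩ :=
      exists_cover_of_ne_top (ne_top_of_le_ne_top (ENat.natCast_ne_top m) h)
    have hCm : C.card ≤ m := by exact_mod_cast hcard ▸ h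
    let c : Fin m → Set X := fun k => if hk : (k : ℕ) < C.card then C.equivFin.symm ⟨k, hk⟩ else ∅
    refine ⟨c, fun k => ?_, fun x hx => ?_⟩
    · unfold c; split_ifs
      exacts [hC _ (Finset.coe_mem _), hP]
    · obtain ⟨S, hSC, hxS⟩ := hA hx
      refine mem_iUnion.2 ⟨⟨C.equivFin ⟨S, hSC⟩, (Fin.is_lt _).trans_le hCm⟩, ?_⟩
      simpa [c] using hxS
  · rintro ⟨c, hc, hA⟩
    calc coverNumber P A ≤ (Finset.univ.image c).card :=
          le_card (by simpa using hc) (by simpa using hA)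
      _ ≤ m := mod_cast (Finset.card_image_le.trans (by simp))

lemma le_coe_of_forall_finset (hP : P ∅) (hPc : IsClosed {f : X → Bool | P {x | f x = true}})
    {m : ℕ} (h : ∀ F : Finset X, coverNumber P (A ∩ F) ≤ m) : coverNumber P A ≤ m := by
  classical
  let Z : Finset X → Set (Fin m → X → Bool) := fun F =>
    {c | (∀ k, P {x | c k x = true}) ∧ A ∩ F ⊆ ⋃ k, {x | c k x = true}}
  have hZ_closed (F : Finset X) : IsClosed (Z F) := by
    have hgen : IsClosed {c : Fin m → X → Bool | ∀ k, P {x | c k x = true}} := by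
      simp only [ofPred_forall]
      exact isClosed_iInter fun k => hPc.preimage (continuous_apply (A := fun _ => X → Bool) k)
    have hcov : IsClosed {c : Fin m → X → Bool | A ∩ F ⊆ ⋃ k, {x | c k x = true}} := by
      simp only [subset_def, mem_iUnion, mem_ofPred_eq, ofPred_forall, ofPred_exists]
      exact isClosed_biInter fun x _ =>
        isClosed_iUnion_of_finite fun k => isClosed_eq (by fun_prop) continuous_const
    exact hgen.inter hcov
  have hZ_nonempty (F : Finset X) : (Z F).Nonempty := by
    obtain ⟨c, hc, hcov⟩ := (le_coe_iff hP).1 (h F)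
    exact ⟨fun k x => decide (x ∈ c k), by simpa using hc, by simpa using hcov⟩
  have hZ_anti : Antitone Z := fun F G hFG c ⟨hc, hcov⟩ =>
    ⟨hc, (inter_subset_inter_right A (by exact_mod_cast hFG)).trans hcov⟩
  obtain ⟨c, hc⟩ := IsCompact.nonempty_iInter_of_directed_nonempty_isCompact_isClosed Z
    hZ_anti.directed_ge hZ_nonempty (fun F => (hZ_closed F).isCompact) hZ_closed
  rw [mem_iInter] at hc
  exact (le_coe_iff hP).2
    ⟨fun k => {x | c k x = true}, (hc ∅).1, fun x hx => (hc {x}).2 ⟨hx, by simp⟩⟩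

lemma eq_iSup_inter_finset (hP : P ∅) (hPc : IsClosed {f : X → Bool | P {x | f x = true}}) :
    coverNumber P A = ⨆ F : Finset X, coverNumber P (A ∩ F) := by
  refine le_antisymm ?_ (iSup_le fun F => mono inter_subset_left)
  cases h : ⨆ F : Finset X, coverNumber P (A ∩ F) using ENat.recTopCoe with
  | top => exact le_top
  | coe m =>
    exact le_coe_of_forall_finset hP hPc fun F =>
      h ▸ le_iSup (fun F : Finset X => coverNumber P (A ∩ F)) F

lemma tendsto_inter (hP : P ∅) (hPc : IsClosed {f : X → Bool | P {x | f x = true}})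
    {s : ℕ → Set X} (hs : Monotone s) (hs_univ : ⋃ n, s n = univ) (A : Set X) :
    Tendsto (fun n => coverNumber P (A ∩ s n)) atTop (𝓝 (coverNumber P A)) := by
  have hmono : Monotone fun n => coverNumber P (A ∩ s n) :=
    fun a b hab => mono (inter_subset_inter_right A (hs hab))
  convert tendsto_atTop_iSup hmono
  refine le_antisymm ?_ (iSup_le fun n => mono inter_subset_left)
  rw [eq_iSup_inter_finset hP hPc]
  refine iSup_le fun F => ?_
  obtain ⟨n, hn⟩ := hs.directed_le.exists_mem_subset_of_finset_subset_biUnion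
    (hs_univ ▸ subset_univ (F : Set X))
  exact (mono (inter_subset_inter_right A hn)).trans
    (le_iSup (fun n => coverNumber P (A ∩ s n)) n)

lemma isClosed_setOf_le (hP : P ∅) (hPc : IsClosed {f : X → Bool | P {x | f x = true}})
    (m : ℕ∞) :
    IsClosed {f : X → Bool | coverNumber P {x | f x = true} ≤ m} := by
  have : {f : X → Bool | coverNumber P {x | f x = true} ≤ m} =
      ⋂ F : Finset X, {f | coverNumber P ({x | f x = true} ∩ F) ≤ m} := by
    ext f
    rw [mem_ofPred_eq, eq_iSup_inter_finset hP hPc, iSup_le_iff, mem_iInter]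
    rfl
  rw [this]
  exact isClosed_iInter fun F => isClosed_setOf_inter_finset F (coverNumber P · ≤ m)

end coverNumber

def WRgen (S : Set (ℕ × ℕ)) : Prop := WRgen1 S ∨ WRgen2 S

lemma phi_eq_coverNumber : phi = coverNumber WRgen := rfl

lemma WRgen_empty : WRgen ∅ := Or.inr fun _ hp => hp.elim

/-- A set is a generator iff every pair of its points violating the second-type condition forces
it to be the vertical line through the pair; each such requirement is a closed condition. -/
lemma isClosed_setOf_WRgen : IsClosed {f : ℕ × ℕ → Bool | WRgen {p | f p = true}} := by
  have : {f : ℕ × ℕ → Bool | WRgen {p | f p = true}} =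
      ⋂ (p : ℕ × ℕ) (q : ℕ × ℕ) (_ : p ≠ q ∧ p.1 ≤ q.1 + q.2 ∧ q.1 ≤ p.1 + p.2),
        ({f | f p = false} ∪ {f | f q = false}) ∪ {fun x => decide (x.1 = p.1)} := by
    ext f
    simp only [WRgen, mem_ofPred_eq, mem_iInter, mem_union, mem_singleton_iff]
    constructor
    · rintro (⟨i, hi⟩ | hgen) p q ⟨hpq, hpq_left, hpq_right⟩
      · by_cases hp : f p = true
        · have hline (x : ℕ × ℕ) : f x = true ↔ x.1 = i := Set.ext_iff.1 hi x
          refine Or.inr (funext fun x => ?_)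
          rw [(hline p).1 hp]
          exact Bool.eq_iff_iff.2 (by simpa using hline x)
        · simp_all
      · by_contra! h
        rcases hgen p (by simpa using h.1.1) q (by simpa using h.1.2) hpq with h' | h' <;> omega
    · intro h
      by_cases hbad : ∃ p q, (p ≠ q ∧ p.1 ≤ q.1 + q.2 ∧ q.1 ≤ p.1 + p.2) ∧ f p = true ∧ f q = true
      · obtain ⟨p, q, hpq, hp, hq⟩ := hbad
        rcases h p q hpq with (hp' | hq') | hline
        · simp_all
        · simp_all
        · exact Or.inl ⟨p.1, by simp [hline]⟩
      · refine Or.inr fun p hp q hq hpq => ?_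
        by_contra! h'
        exact hbad ⟨p, q, ⟨hpq, h'⟩, hp, hq⟩
  rw [this]
  exact isClosed_iInter fun p => isClosed_iInter fun q => isClosed_iInter fun _ =>
    ((isClosed_eq (continuous_apply p) continuous_const).union
      (isClosed_eq (continuous_apply q) continuous_const)).union isClosed_singleton

theorem WR_sigma02 :
    phi ∅ = 0 ∧
    (∀ A B : Set (ℕ × ℕ), phi A ≤ phi (A ∪ B) ∧ phi (A ∪ B) ≤ phi A + phi B) ∧
    (∀ (e : ℕ ≃ (ℕ × ℕ)) (A : Set (ℕ × ℕ)),
      Filter.Tendsto (fun n => phi (A ∩ (e '' Set.Iic n))) Filter.atTop (nhds (phi A))) ∧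
    WR = {A | phi A < ⊤} ∧
    (∃ F : ℕ → Set ((ℕ × ℕ) → Bool), (∀ n, IsClosed (F n)) ∧
      {f : (ℕ × ℕ) → Bool | {p | f p = true} ∈ WR} = ⋃ n, F n) := by
  have hWR : WR = {A | phi A < ⊤} := Set.ext fun _ => coverNumber.lt_top_iff.symm
  rw [phi_eq_coverNumber] at hWR ⊢
  refine ⟨coverNumber.empty,
    fun A B => ⟨coverNumber.mono subset_union_left, coverNumber.union_le A B⟩,
    fun e A => coverNumber.tendsto_inter WRgen_empty isClosed_setOf_WRgen ?_ ?_ A, hWR,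
    fun n => {f | coverNumber WRgen {p | f p = true} ≤ n},
    fun n => coverNumber.isClosed_setOf_le WRgen_empty isClosed_setOf_WRgen n, ?_⟩
  · exact fun m n hmn => image_mono (Iic_subset_Iic.2 hmn)
  · exact iUnion_eq_univ_iff.2 fun x =>
      ⟨e.symm x, e.symm x, mem_Iic.2 le_rfl, e.apply_symm_apply x⟩
  · ext f
    simp only [hWR, mem_ofPred_eq, mem_iUnion]
    exact ⟨fun h => (ENat.exists_nat_gt h.ne).imp fun _ => le_of_lt,
      fun ⟨n, hn⟩ => hn.trans_lt (ENat.natCast_lt_top n)⟩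
end

section
/- If points a₀,...,a_k ∈ ω×ω satisfy proj₁(a_i) < proj₁(a_j) for all i < j ≤ k and proj₁(a_i)+proj₂(a_i) > proj₁(a_k) for all i ≤ k, then {a₀,...,a_k} cannot be covered by k many generators of the second type of the ideal WR. -/
open Set

/-!
By pigeonhole two of the `k + 1` points, `a i` and `a j` with `i < j`, lie in a common generator.
Its separation condition then gives `Σ (a i) < (a j).1 ≤ (a k).1`, against `Σ (a i) > (a k).1`.
-/

theorem WRgen2.fst_add_snd_lt_fst {S : Set (ℕ × ℕ)} (hS : WRgen2 S) {p q : ℕ × ℕ}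
    (hp : p ∈ S) (hq : q ∈ S) (hpq : p.1 < q.1) : p.1 + p.2 < q.1 := by
  have hne : p ≠ q := fun h => hpq.ne (congrArg Prod.fst h)
  exact (hS p hp q hq hne).resolve_left (by omega)

theorem exists_lt_mem_of_card_lt_of_range_subset {ι α : Type*} [LinearOrder ι] [Fintype ι]
    {a : ι → α} {C : Finset (Set α)} (hC : C.card < Fintype.card ι)
    (hcov : range a ⊆ ⋃₀ ↑C) : ∃ S ∈ C, ∃ i j, i < j ∧ a i ∈ S ∧ a j ∈ S := by
  choose f hfC hfa using fun i => hcov (mem_range_self i)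
  obtain ⟨i, -, j, -, hij, hfij⟩ :=
    Finset.exists_ne_map_eq_of_card_lt_of_maps_to (s := Finset.univ) (f := f)
      (by simpa using hC) (fun i _ => hfC i)
  rcases hij.lt_or_gt with hlt | hlt
  · exact ⟨f i, hfC i, i, j, hlt, hfa i, hfij ▸ hfa j⟩
  · exact ⟨f i, hfC i, j, i, hlt, hfij ▸ hfa j, hfa i⟩

theorem WR_no_small_cover (k : ℕ) (a : Fin (k + 1) → ℕ × ℕ)
    (h1 : ∀ i j : Fin (k + 1), i < j → (a i).1 < (a j).1)
    (h2 : ∀ i : Fin (k + 1), (a i).1 + (a i).2 > (a (Fin.last k)).1) :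
    ¬ ∃ C : Finset (Set (ℕ × ℕ)), C.card ≤ k ∧ (∀ S ∈ C, WRgen2 S) ∧
      Set.range a ⊆ ⋃₀ ↑C := by
  rintro ⟨C, hcard, hgen, hcov⟩
  obtain ⟨S, hSC, i, j, hij, hi, hj⟩ :=
    exists_lt_mem_of_card_lt_of_range_subset (by simpa using Nat.lt_succ_of_le hcard) hcov
  have hsum : (a i).1 + (a i).2 < (a j).1 := (hgen S hSC).fst_add_snd_lt_fst hi hj (h1 i j hij)
  have hlast : (a j).1 ≤ (a (Fin.last k)).1 := by
    rcases (Fin.le_last j).eq_or_lt with hjk | hjk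
    · rw [hjk]
    · exact (h1 j _ hjk).le
  have hik := h2 i
  omega
end

section
/- Every ideal on ω isomorphic to the ideal WR has property Mon: for every sequence of reals (x_n)_{n∈ω} there exists a set M not in the ideal such that (x_n)_{n∈M} is monotone. -/
open Set

/-!
Transport along `e` and work in `ℕ × ℕ`. A generator of `WR` contains at most one point of a set
whose points `p ≠ q` lie in distinct columns with `p.1 ≤ q.2`; so a sequence meeting distinct
columns whose heights outgrow the column indices of the next terms is `WR`-positive.
By Ramsey's theorem every column contains an infinite set on which `x` is monotone or antitone,
and passing to the order dual we may keep infinitely many monotone ones. Among these columns,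
"every value of column `i` is exceeded in column `i'`" is transitive, so Ramsey's theorem yields
infinitely many columns in which it holds for all pairs or for none. This gives a diagonal sequence
with nondecreasing, resp. decreasing values; since the columns are monotone, each next term can be
taken with arbitrarily large index and height.
-/
open Function OrderDual

lemma inter_subsingleton_of_WRgen {S F : Set (ℕ × ℕ)} (hS : WRgen1 S ∨ WRgen2 S)
    (hF : F.Pairwise fun p q => p.1 ≠ q.1 ∧ p.1 ≤ q.2) : {p ∈ F | p ∈ S}.Subsingleton := by
  rintro p ⟨hpF, hpS⟩ q ⟨hqF, hqS⟩
  by_contra hpq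
  obtain ⟨hne, hpq₂⟩ := hF hpF hqF hpq
  obtain ⟨-, hqp₂⟩ := hF hqF hpF (Ne.symm hpq)
  rcases hS with ⟨i, rfl⟩ | hS
  · exact hne (hpS.trans hqS.symm)
  · rcases hS p hpS q hqS hpq with h | h <;> omega

lemma notMem_WR_of_pairwise {A : Set (ℕ × ℕ)}
    (h : ∀ c : ℕ, ∃ F : Finset (ℕ × ℕ), ↑F ⊆ A ∧ c < F.card ∧
      (F : Set (ℕ × ℕ)).Pairwise fun p q => p.1 ≠ q.1 ∧ p.1 ≤ q.2) :
    A ∉ WR := by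
  rintro ⟨C, hC, hAC⟩
  obtain ⟨F, hFA, hcard, hF⟩ := h C.card
  refine hcard.not_ge (Finset.card_le_card_of_forall_subsingleton (· ∈ ·) (fun p hp => ?_)
    fun S hS => inter_subsingleton_of_WRgen (hC S hS) hF)
  simpa using hAC (hFA hp)

lemma range_notMem_WR {p : ℕ → ℕ × ℕ} (hp : Injective fun k => (p k).1)
    (hle : ∀ l t, t ≤ 2 * l → (p t).1 ≤ (p l).2) : range p ∉ WR := by
  refine notMem_WR_of_pairwise fun c => ⟨(Finset.Icc (c + 1) (2 * c + 1)).image p, ?_, ?_, ?_⟩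
  · simp only [Finset.coe_image]
    exact image_subset_range _ _
  · rw [Finset.card_image_of_injective _ hp.of_comp, Nat.card_Icc]
    omega
  · simp only [Finset.coe_image, Finset.coe_Icc]
    rintro _ ⟨a, ha, rfl⟩ _ ⟨b, hb, rfl⟩ hab
    -- two indices in `[c + 1, 2c + 1]` are at most a factor `2` apart
    exact ⟨fun h => hab (congrArg p (hp h)), hle b a (by simp at ha hb; omega)⟩

lemma exists_mem_lt_and_le_snd {e : ℕ ≃ ℕ × ℕ} {S : Set ℕ} {c : ℕ} (hS : S.Infinite)
    (hc : ∀ m ∈ S, (e m).1 = c) (N H : ℕ) : ∃ m ∈ S, N < m ∧ H ≤ (e m).2 := by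
  have hbad : (Iic N ∪ e ⁻¹' ({c} ×ˢ Iio H)).Finite :=
    (finite_Iic N).union (((finite_singleton c).prod (finite_Iio H)).preimage e.injective.injOn)
  obtain ⟨m, hmS, hm⟩ := (hS.sdiff hbad).nonempty
  simp only [mem_union, mem_Iic, mem_preimage, mem_prod, mem_singleton_iff, mem_Iio,
    not_or, not_le, not_and, not_lt] at hm
  exact ⟨m, hmS, hm.1, hm.2 (hc m hmS)⟩

lemma monotoneOn_range_of_strictMono {β γ α : Type*} [LinearOrder β] [Preorder γ] [Preorder α]
    {ψ : β → γ} {f : γ → α} (hψ : StrictMono ψ) (hf : Monotone (f ∘ ψ)) :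
    MonotoneOn f (range ψ) := by
  rintro _ ⟨a, rfl⟩ _ ⟨b, rfl⟩ hab
  exact hf (hψ.le_iff_le.mp hab)

lemma infinite_setOf_le_of_monotoneOn {α : Type*} [Preorder α] {x : ℕ → α} {s : Set ℕ}
    (hs : s.Infinite) (hx : MonotoneOn x s) {m : ℕ} (hm : m ∈ s) :
    {n ∈ s | x m ≤ x n}.Infinite :=
  (hs.sdiff (finite_Iio m)).mono fun _ hn => ⟨hn.1, hx hm hn.1 (not_lt.mp hn.2)⟩

lemma exists_infinite_monotoneOn_or_antitoneOn {α : Type*} [LinearOrder α] {S : Set ℕ}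
    (hS : S.Infinite) (x : ℕ → α) :
    ∃ T ⊆ S, T.Infinite ∧ (MonotoneOn x T ∨ AntitoneOn x T) := by
  obtain ⟨g, hg | hg⟩ := exists_increasing_or_nonincreasing_subseq (· ≤ ·) (x ∘ Nat.nth (· ∈ S))
  all_goals
    have hψ : StrictMono (Nat.nth (· ∈ S) ∘ g) := (Nat.nth_strictMono hS).comp g.strictMono
    refine ⟨_, range_subset_iff.mpr fun k => Nat.nth_mem_of_infinite hS (g k),
      infinite_range_of_injective hψ.injective, ?_⟩
  · exact Or.inl (monotoneOn_range_of_strictMono hψ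
      (monotone_nat_of_le_succ fun n => hg n (n + 1) n.lt_succ_self))
  · exact Or.inr (monotoneOn_toDual_comp_iff.mp (monotoneOn_range_of_strictMono hψ
      (monotone_nat_of_le_succ fun n => (not_le.mp (hg n (n + 1) n.lt_succ_self)).le)))

theorem exists_monotoneOn_notMem_WR_of_chain {α : Type*} [Preorder α] (e : ℕ ≃ ℕ × ℕ)
    (x : ℕ → α) {j : ℕ → ℕ} (hj : Injective j) (P : ℕ → Set ℕ)
    (hPj : ∀ k, ∀ n ∈ P k, (e n).1 = j k) (hP₀ : (P 0).Infinite)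
    (hP : ∀ k, ∀ n ∈ P k, {m ∈ P (k + 1) | x n ≤ x m}.Infinite) :
    ∃ M, e '' M ∉ WR ∧ MonotoneOn x M := by
  set H : ℕ → ℕ := fun k => (Finset.range (2 * k + 1)).sup j
  have hstep : ∀ k n, n ∈ P k →
      ∃ m, (m ∈ P (k + 1) ∧ H (k + 1) ≤ (e m).2) ∧ n < m ∧ x n ≤ x m := by
    intro k n hn
    obtain ⟨m, ⟨hmP, hnm⟩, hlt, hH⟩ :=
      exists_mem_lt_and_le_snd (hP k n hn) (fun m hm => hPj _ m hm.1) n (H (k + 1))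
    exact ⟨m, ⟨hmP, hH⟩, hlt, hnm⟩
  choose! g hgP hg using hstep
  obtain ⟨n₀, hn₀P, -, hn₀H⟩ := exists_mem_lt_and_le_snd hP₀ (hPj 0) 0 (H 0)
  let n : ℕ → ℕ := fun k => Nat.rec n₀ g k
  have hn : ∀ k, n k ∈ P k ∧ H k ≤ (e (n k)).2 := by
    intro k
    induction k with
    | zero => exact ⟨hn₀P, hn₀H⟩
    | succ k ih => exact hgP k (n k) ih.1
  have hn_strictMono : StrictMono n := strictMono_nat_of_lt_succ fun k => (hg k (n k) (hn k).1).1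
  refine ⟨range n, ?_, monotoneOn_range_of_strictMono hn_strictMono
    (monotone_nat_of_le_succ fun k => (hg k (n k) (hn k).1).2)⟩
  have hcol : ∀ k, (e (n k)).1 = j k := fun k => hPj k _ (hn k).1
  rw [← range_comp]
  refine range_notMem_WR (by simpa only [comp_apply, hcol] using hj) fun l t ht => ?_
  calc (e (n t)).1 = j t := hcol t
    _ ≤ H l := Finset.le_sup (Finset.mem_range.mpr (by omega))
    _ ≤ (e (n l)).2 := (hn l).2

theorem exists_notMem_WR_of_monotoneOn_columns {α : Type*} [LinearOrder α] (e : ℕ ≃ ℕ × ℕ)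
    (x : ℕ → α) (C : ℕ → Set ℕ) (hC : ∀ i, (C i).Infinite) (hCe : ∀ i, ∀ n ∈ C i, (e n).1 = i)
    {J : Set ℕ} (hJ : J.Infinite) (hx : ∀ i ∈ J, MonotoneOn x (C i)) :
    ∃ M, e '' M ∉ WR ∧ (MonotoneOn x M ∨ AntitoneOn x M) := by
  let R : ℕ → ℕ → Prop := fun i i' => ∀ n ∈ C i, ∃ m ∈ C i', x n ≤ x m
  have : IsTrans ℕ R := ⟨fun i i' i'' h h' n hn =>
    let ⟨m, hm, hnm⟩ := h n hn
    let ⟨m', hm', hmm'⟩ := h' m hm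
    ⟨m', hm', hnm.trans hmm'⟩⟩
  let f : ℕ → ℕ := fun k => hJ.natEmbedding _ k
  have hf : Injective f := Subtype.val_injective.comp (hJ.natEmbedding _).injective
  have hfx : ∀ k, MonotoneOn x (C (f k)) := fun k => hx _ (hJ.natEmbedding _ k).2
  obtain ⟨g, hup | hdown⟩ := exists_increasing_or_nonincreasing_subseq R f
  · refine (exists_monotoneOn_notMem_WR_of_chain e x (hf.comp g.injective) (fun k => C (f (g k)))
      (fun k => hCe _) (hC _) fun k n hn => ?_).imp fun M => And.imp_right Or.inl
    obtain ⟨m, hm, hnm⟩ := hup k (k + 1) k.lt_succ_self n hn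
    exact (infinite_setOf_le_of_monotoneOn (hC _) (hfx _) hm).mono
      fun m' hm' => ⟨hm'.1, hnm.trans hm'.2⟩
  · let P : ℕ → Set ℕ := fun k => {n ∈ C (f (g k)) | ∀ m ∈ C (f (g (k + 1))), x m < x n}
    have hP : ∀ k, (P k).Infinite := by
      intro k
      obtain ⟨n, hn, hdom⟩ : ∃ n ∈ C (f (g k)), ∀ m ∈ C (f (g (k + 1))), x m < x n := by
        simpa [R] using hdown k (k + 1) k.lt_succ_self
      exact (infinite_setOf_le_of_monotoneOn (hC _) (hfx _) hn).mono
        fun n' hn' => ⟨hn'.1, fun m hm => (hdom m hm).trans_le hn'.2⟩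
    refine (exists_monotoneOn_notMem_WR_of_chain e (toDual ∘ x) (hf.comp g.injective) P
      (fun k n hn => hCe _ n hn.1) (hP 0) fun k n hn => (hP (k + 1)).mono
        fun m hm => ⟨hm, toDual_le_toDual.mpr (hn.2 m hm.1).le⟩).imp
      fun M => And.imp_right fun h => Or.inr (monotoneOn_toDual_comp_iff.mp h)

theorem exists_monotoneOn_or_antitoneOn_notMem_WR {α : Type*} [LinearOrder α]
    (e : ℕ ≃ ℕ × ℕ) (x : ℕ → α) :
    ∃ M, e '' M ∉ WR ∧ (MonotoneOn x M ∨ AntitoneOn x M) := by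
  have hcol : ∀ i, {n | (e n).1 = i}.Infinite := fun i =>
    infinite_of_injective_forall_mem (e.symm.injective.comp (Prod.mk_right_injective i))
      fun b => by simp
  choose D hDcol hDinf hDx using fun i => exists_infinite_monotoneOn_or_antitoneOn (hcol i) x
  have hsplit : {i | MonotoneOn x (D i)}.Infinite ∨ {i | AntitoneOn x (D i)}.Infinite := by
    by_contra! h
    exact infinite_univ ((h.1.union h.2).subset fun i _ => hDx i)
  rcases hsplit with h | h
  · exact exists_notMem_WR_of_monotoneOn_columns e x D hDinf (fun i _ hn => hDcol i hn) h
      fun _ => id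
  · obtain ⟨M, hM, hmono⟩ := exists_notMem_WR_of_monotoneOn_columns e (toDual ∘ x) D hDinf
      (fun i _ hn => hDcol i hn) h fun _ => monotoneOn_toDual_comp_iff.mpr
    exact ⟨M, hM, (hmono.imp monotoneOn_toDual_comp_iff.mp antitoneOn_toDual_comp_iff.mp).symm⟩

theorem WR_iso_Mon_general (I : Set (Set ℕ))
    (hiso : ∃ e : ℕ ≃ (ℕ × ℕ), ∀ A : Set (ℕ × ℕ), A ∈ WR ↔ ⇑e ⁻¹' A ∈ I) :
    ∀ x : ℕ → ℝ, ∃ M : Set ℕ, M ∉ I ∧ (MonotoneOn x M ∨ AntitoneOn x M) := by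
  obtain ⟨e, he⟩ := hiso
  intro x
  obtain ⟨M, hM, hx⟩ := exists_monotoneOn_or_antitoneOn_notMem_WR e x
  refine ⟨M, fun hMI => hM ((he _).mpr ?_), hx⟩
  rwa [e.preimage_image]

theorem WR_iso_Mon (I : Set (Set ℕ)) (hI : IsIdealOn I)
    (hiso : ∃ e : ℕ ≃ (ℕ × ℕ), ∀ A : Set (ℕ × ℕ), A ∈ WR ↔ ⇑e ⁻¹' A ∈ I) :
    ∀ x : ℕ → ℝ, ∃ M : Set ℕ, M ∉ I ∧ (MonotoneOn x M ∨ AntitoneOn x M) :=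
  WR_iso_Mon_general I hiso
end

section
/- The ideal WR is not 2-Ramsey: there is a coloring λ: [ω×ω]² → 2 such that every λ-homogeneous set belongs to WR. -/
/-!
A `λ`-homogeneous set of colour `0` is by definition a generator of the second kind of `WR`.
A homogeneous set of colour `1` containing a point `(i, j)` has all its first coordinates
at most `i + j`, so it is covered by finitely many vertical lines.
-/

open Set

/-- The paper's `λ` with `true` for colour `1`, written symmetrically: when `p` is
lexicographically below `q` the second conjunct always holds. -/
def wrColoring (p q : ℕ × ℕ) : Bool :=
  decide (q.1 ≤ p.1 + p.2 ∧ p.1 ≤ q.1 + q.2)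

theorem wrColoring_comm (p q : ℕ × ℕ) : wrColoring p q = wrColoring q p := by
  simp only [wrColoring, and_comm]

theorem mem_WR_of_WRgen2 {H : Set (ℕ × ℕ)} (hH : WRgen2 H) : H ∈ WR :=
  ⟨{H}, by simpa using Or.inr hH, by simp⟩

theorem mem_WR_of_fst_le {H : Set (ℕ × ℕ)} (n : ℕ) (hH : ∀ p ∈ H, p.1 ≤ n) : H ∈ WR := by
  refine ⟨(Finset.range (n + 1)).image fun m => {p : ℕ × ℕ | p.1 = m}, ?_, ?_⟩
  · simp only [Finset.mem_image]
    rintro S ⟨m, -, rfl⟩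
    exact Or.inl ⟨m, rfl⟩
  · intro p hp
    simp only [Finset.coe_image, Finset.coe_range, sUnion_image, mem_iUnion, mem_Iio]
    exact ⟨p.1, Nat.lt_succ_of_le (hH p hp), rfl⟩

theorem WRgen2_of_pairwise_wrColoring_false {H : Set (ℕ × ℕ)}
    (hH : H.Pairwise fun p q => wrColoring p q = false) : WRgen2 H := by
  intro p hp q hq hpq
  have := hH hp hq hpq
  simp only [wrColoring, decide_eq_false_iff_not, not_and_or, not_le] at this
  omega

theorem mem_WR_of_pairwise_wrColoring_true {H : Set (ℕ × ℕ)}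
    (hH : H.Pairwise fun p q => wrColoring p q = true) : H ∈ WR := by
  rcases H.eq_empty_or_nonempty with rfl | ⟨p, hp⟩
  · exact mem_WR_of_WRgen2 fun _ h => h.elim
  refine mem_WR_of_fst_le (p.1 + p.2) fun q hq => ?_
  rcases eq_or_ne p q with rfl | hpq
  · exact Nat.le_add_right _ _
  · exact (decide_eq_true_iff.mp (hH hp hq hpq)).1

theorem mem_WR_of_wrColoring_homogeneous {H : Set (ℕ × ℕ)} {c : Bool}
    (hH : H.Pairwise fun p q => wrColoring p q = c) : H ∈ WR := by
  cases c
  · exact mem_WR_of_WRgen2 (WRgen2_of_pairwise_wrColoring_false hH)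
  · exact mem_WR_of_pairwise_wrColoring_true hH

theorem WR_not_twoRamsey :
    (¬ ∀ f : (ℕ × ℕ) → (ℕ × ℕ) → Bool, (∀ p q, f p q = f q p) →
      ∃ H : Set (ℕ × ℕ), H ∉ WR ∧ ∃ c, ∀ p ∈ H, ∀ q ∈ H, p ≠ q → f p q = c) ∧
    (∃ lam : (ℕ × ℕ) → (ℕ × ℕ) → Bool, (∀ p q, lam p q = lam q p) ∧
      ∀ H : Set (ℕ × ℕ), (∃ c, ∀ p ∈ H, ∀ q ∈ H, p ≠ q → lam p q = c) → H ∈ WR) := by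
  have homogeneous_mem_WR (H : Set (ℕ × ℕ))
      (hH : ∃ c, ∀ p ∈ H, ∀ q ∈ H, p ≠ q → wrColoring p q = c) : H ∈ WR :=
    let ⟨_, hc⟩ := hH
    mem_WR_of_wrColoring_homogeneous fun _ hp _ hq => hc _ hp _ hq
  refine ⟨fun h => ?_, wrColoring, wrColoring_comm, homogeneous_mem_WR⟩
  obtain ⟨H, hH, hhom⟩ := h wrColoring wrColoring_comm
  exact hH (homogeneous_mem_WR H hhom)
end

section
/- An ideal I on ω is weakly Ramsey if and only if for every coloring f: [ω]² → 2, such that for each x ∈ ω at least one of the sets {y : f({x,y}) = 0} and {y : f({x,y}) = 1} belongs to I, there is an I-positive set H with f constant on [H]². -/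
open Set

/-!
If every `x` has a colour `c x` taken by `f x y` for all `y` outside a set in `I`, then the
finite sequences `s` with `f (s i) (s j) = c (s i)` for `i < j` form a tree whose ramifications
lie in `I*`. An `I`-positive branch splits according to `c` into finitely many pieces, one of
which is `I`-positive, and it is homogeneous.

Conversely, given a tree `T`, colour a pair `x < y` by whether `y` extends every node of `T`
that is an increasing sequence of numbers `≤ x`. Only finitely many nodes are involved, so at
every `x` the colour `false` occurs only on a set in `I`. A positive homogeneous set therefore
has colour `true`, and its increasing enumeration, without its first element, is a branch of `T`.
-/

namespace IsIdealOn

variable {α : Type*} {I : Set (Set α)} {A B : Set α}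

theorem mono (hI : IsIdealOn I) (hB : B ∈ I) (hAB : A ⊆ B) : A ∈ I :=
  hI.1 B hB A hAB

theorem union_mem (hI : IsIdealOn I) (hA : A ∈ I) (hB : B ∈ I) : A ∪ B ∈ I :=
  hI.2.1 A hA B hB

theorem finite_mem (hI : IsIdealOn I) (hA : A.Finite) : A ∈ I :=
  hI.2.2.1 A hA

theorem infinite_of_notMem (hI : IsIdealOn I) (hA : A ∉ I) : A.Infinite :=
  fun h => hA (hI.finite_mem h)

theorem mem_of_subset_insert (hI : IsIdealOn I) {a : α} (hB : B ∈ I) (hAB : A ⊆ insert a B) :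
    A ∈ I :=
  hI.mono (insert_eq a B ▸ hI.union_mem (hI.finite_mem (finite_singleton a)) hB) hAB

theorem biUnion_mem (hI : IsIdealOn I) {ι : Type*} {s : Set ι} (hs : s.Finite)
    {t : ι → Set α} (ht : ∀ i ∈ s, t i ∈ I) : (⋃ i ∈ s, t i) ∈ I := by
  induction s, hs using Set.Finite.induction_on with
  | empty => simpa using hI.finite_mem finite_empty
  | insert _ _ ih =>
    rw [biUnion_insert]
    exact hI.union_mem (ht _ (mem_insert _ _)) (ih fun i hi => ht i (mem_insert_of_mem _ hi))

theorem exists_inter_preimage_notMem (hI : IsIdealOn I) {ι : Type*} [Finite ι] (g : α → ι)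
    (hA : A ∉ I) : ∃ i, A ∩ g ⁻¹' {i} ∉ I := by
  by_contra! h
  exact hA (hI.mono (hI.biUnion_mem finite_univ fun i _ => h i)
    fun a ha => mem_biUnion (mem_univ (g a)) ⟨ha, rfl⟩)

end IsIdealOn

section Homogeneous

variable {α : Type*} {I : Set (Set α)}

theorem isTree_setOf_pairwise (R : α → α → Prop) : IsTree {s : List α | s.Pairwise R} :=
  fun _ hs _ ht => hs.sublist ht.sublist

theorem WeaklyRamsey.exists_seq_pairwise (hWR : WeaklyRamsey I) (hI : IsIdealOn I)
    {R : α → α → Prop} (hR : ∀ a, {b | ¬R a b} ∈ I) :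
    ∃ b : ℕ → α, (∀ i j, i < j → R (b i) (b j)) ∧ range b ∉ I := by
  have hram {s : List α} (hs : s.Pairwise R) :
      {y | (s ++ [y]).Pairwise R}ᶜ ⊆ ⋃ a ∈ {a | a ∈ s}, {b | ¬R a b} := by
    intro y hy
    by_contra! hsy
    simp_all [List.pairwise_append]
  obtain ⟨b, hbT, hb⟩ := hWR _ List.Pairwise.nil (isTree_setOf_pairwise R) fun s hs =>
    hI.mono (hI.biUnion_mem s.finite_toSet fun a _ => hR a) (hram hs)
  refine ⟨b, fun i j hij => ?_, hb⟩
  have hchain := List.pairwise_map.1 (hbT (j + 1))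
  rw [List.range_succ] at hchain
  exact hchain.rel_of_mem_append (List.mem_range.2 hij) (List.mem_singleton_self j)

theorem WeaklyRamsey.exists_homogeneous (hWR : WeaklyRamsey I) (hI : IsIdealOn I)
    {κ : Type*} [Finite κ] (f : α → α → κ) (hf : ∀ x y, f x y = f y x)
    (hfI : ∀ x, ∃ c, {y | f x y ≠ c} ∈ I) :
    ∃ H : Set α, H ∉ I ∧ ∃ c, ∀ x ∈ H, ∀ y ∈ H, x ≠ y → f x y = c := by
  choose c hc using hfI
  obtain ⟨b, hbR, hb⟩ := hWR.exists_seq_pairwise hI (R := fun x y => f x y = c x) hc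
  obtain ⟨k, hk⟩ := hI.exists_inter_preimage_notMem c hb
  refine ⟨_, hk, k, ?_⟩
  rintro _ ⟨⟨i, rfl⟩, hi⟩ _ ⟨⟨j, rfl⟩, hj⟩ hne
  rcases lt_trichotomy i j with hij | rfl | hij
  · exact (hbR i j hij).trans hi
  · exact absurd rfl hne
  · exact (hf _ _).trans ((hbR j i hij).trans hj)

end Homogeneous

section Extension

variable {T : Set (List ℕ)}

/-- `y` extends every node of `T` that is an increasing list of numbers `≤ x`. -/
def ExtendsBelow (T : Set (List ℕ)) (x y : ℕ) : Prop :=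
  ∀ l ∈ T, l.Sublist (List.range (x + 1)) → l ++ [y] ∈ T

theorem setOf_not_extendsBelow_mem {I : Set (Set ℕ)} (hI : IsIdealOn I)
    (hT : ∀ s ∈ T, {x | s ++ [x] ∈ T}ᶜ ∈ I) (x : ℕ) : {y | ¬ExtendsBelow T x y} ∈ I := by
  have hfin : {l | l ∈ T ∧ l.Sublist (List.range (x + 1))}.Finite :=
    (List.range (x + 1)).sublists.finite_toSet.subset fun l hl => List.mem_sublists.2 hl.2
  refine hI.mono (hI.biUnion_mem hfin fun l hl => hT l hl.1) fun y hy => ?_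
  simp only [ExtendsBelow, mem_ofPred_eq, not_forall] at hy
  obtain ⟨l, hlT, hl, hly⟩ := hy
  exact mem_biUnion ⟨hlT, hl⟩ hly

open Classical in
noncomputable def extensionColoring (T : Set (List ℕ)) (x y : ℕ) : Bool :=
  decide (ExtendsBelow T (min x y) (max x y))

theorem extensionColoring_comm (x y : ℕ) : extensionColoring T x y = extensionColoring T y x := by
  rw [extensionColoring, extensionColoring, min_comm, max_comm]

theorem extensionColoring_eq_true_iff {x y : ℕ} (hxy : x ≤ y) :
    extensionColoring T x y = true ↔ ExtendsBelow T x y := by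
  simp [extensionColoring, hxy]

theorem setOf_extensionColoring_eq_false_mem {I : Set (Set ℕ)} (hI : IsIdealOn I)
    (hT : ∀ s ∈ T, {x | s ++ [x] ∈ T}ᶜ ∈ I) (x : ℕ) :
    {y | extensionColoring T x y = false} ∈ I := by
  refine hI.mono (hI.union_mem (hI.finite_mem (finite_Iic x))
    (setOf_not_extendsBelow_mem hI hT x)) fun y hy => ?_
  rcases le_or_gt y x with hyx | hxy
  · exact Or.inl hyx
  · exact Or.inr fun h => by
      simp [(extensionColoring_eq_true_iff hxy.le).2 h] at hy

theorem map_range_sublist_range {e : ℕ → ℕ} (he : StrictMono e) (k : ℕ) :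
    ((List.range k).map (e ∘ Nat.succ)).Sublist (List.range (e k + 1)) := by
  have hlt : ((List.range k).map (e ∘ Nat.succ)).Pairwise (· < ·) :=
    List.pairwise_map.2 (List.pairwise_lt_range.imp fun h => he (Nat.succ_lt_succ h))
  refine List.sublist_of_subperm_of_pairwise (List.subperm_of_subset hlt.nodup ?_) hlt
    List.pairwise_lt_range
  intro _ hm
  obtain ⟨i, hi, rfl⟩ := List.mem_map.1 hm
  exact List.mem_range.2 (Nat.lt_succ_of_le (he.monotone (List.mem_range.1 hi)))

/-- The branch is `e 1, e 2, …`: each `e (k + 1)` extends the node `[e 1, …, e k]`, whose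
entries are `≤ e k`. -/
theorem map_range_mem_of_extendsBelow (hnil : [] ∈ T) {e : ℕ → ℕ} (he : StrictMono e)
    (hext : ∀ k, ExtendsBelow T (e k) (e (k + 1))) (k : ℕ) :
    (List.range k).map (e ∘ Nat.succ) ∈ T := by
  induction k with
  | zero => exact hnil
  | succ k ih =>
    rw [List.range_succ, List.map_append]
    exact hext k _ ih (map_range_sublist_range he k)

end Extension

theorem weaklyRamsey_of_homogeneous {I : Set (Set ℕ)} (hI : IsIdealOn I)
    (hcol : ∀ f : ℕ → ℕ → Bool, (∀ x y, f x y = f y x) → (∀ x, {y | f x y = false} ∈ I) →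
      ∃ H : Set ℕ, H ∉ I ∧ ∃ c, ∀ x ∈ H, ∀ y ∈ H, x ≠ y → f x y = c) :
    WeaklyRamsey I := by
  intro T hnil _ hT
  have hfalse := setOf_extensionColoring_eq_false_mem hI hT
  obtain ⟨H, hH, c, hHc⟩ := hcol (extensionColoring T) extensionColoring_comm hfalse
  have hHinf := hI.infinite_of_notMem hH
  obtain rfl : c = true := by
    obtain ⟨x, hx⟩ := hHinf.nonempty
    by_contra hc
    refine hH (hI.mem_of_subset_insert (a := x) (hfalse x) fun y hy => ?_)
    rcases eq_or_ne y x with rfl | hyx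
    · exact mem_insert _ _
    · exact Or.inr ((hHc x hx y hy hyx.symm).trans (Bool.eq_false_iff.2 hc))
  set e := Nat.nth (· ∈ H)
  have he : StrictMono e := Nat.nth_strictMono hHinf
  have hext (k : ℕ) : ExtendsBelow T (e k) (e (k + 1)) :=
    (extensionColoring_eq_true_iff (he k.lt_succ_self).le).1 <|
      hHc _ (Nat.nth_mem_of_infinite hHinf k) _ (Nat.nth_mem_of_infinite hHinf (k + 1))
        (he k.lt_succ_self).ne
  refine ⟨e ∘ Nat.succ, map_range_mem_of_extendsBelow hnil he hext, fun hb => hH ?_⟩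
  refine hI.mem_of_subset_insert (a := e 0) hb fun y hy => ?_
  have hrange : range e = H := Nat.range_nth_of_infinite hHinf
  rwa [insert_eq, Nat.range_of_succ, hrange]

theorem weaklyRamsey_iff_coloring (I : Set (Set ℕ)) (hI : IsIdealOn I) :
    WeaklyRamsey I ↔
    ∀ f : ℕ → ℕ → Bool, (∀ x y, f x y = f y x) →
      (∀ x : ℕ, {y | f x y = false} ∈ I ∨ {y | f x y = true} ∈ I) →
      ∃ H : Set ℕ, H ∉ I ∧ ∃ c, ∀ x ∈ H, ∀ y ∈ H, x ≠ y → f x y = c := by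
  refine ⟨fun hWR f hf hfI => hWR.exists_homogeneous hI f hf fun x => ?_,
    fun hcol => weaklyRamsey_of_homogeneous hI fun f hf hfI => hcol f hf fun x => Or.inl (hfI x)⟩
  rcases hfI x with h | h
  · exact ⟨true, by simpa using h⟩
  · exact ⟨false, by simpa using h⟩
end

section
/- Every weakly Ramsey ideal on ω is locally selective. -/
/-!
Given a partition `(X n)` of `ω` into sets of `I`, the finite sequences whose terms lie in
pairwise distinct pieces form a tree. The points that do not extend a node `s` lie in the
finitely many pieces met by `s`, so they form a set in `I`. Weak Ramseyness yields a branch with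
`I`-positive range, and this range is a selector.
-/

open Set

namespace IsIdealOn

variable {α ι : Type*} {I : Set (Set α)}

theorem empty_mem (hI : IsIdealOn I) : ∅ ∈ I :=
  hI.2.2.1 ∅ finite_empty

theorem biUnion_list_mem (hI : IsIdealOn I) {f : ι → Set α} :
    ∀ l : List ι, (∀ i ∈ l, f i ∈ I) → ⋃ i ∈ l, f i ∈ I
  | [], _ => by simpa using hI.empty_mem
  | i :: l, hf => by
    simp only [List.mem_cons, iUnion_or, iUnion_union_distrib, iUnion_iUnion_eq_left]
    exact hI.2.1 _ (hf i List.mem_cons_self) _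
      (biUnion_list_mem hI l fun j hj => hf j (List.mem_cons_of_mem i hj))

end IsIdealOn

namespace IsPartition

variable {α : Type*} {X : ℕ → Set α}

noncomputable def index (hX : IsPartition X) (x : α) : ℕ :=
  (mem_iUnion.1 (hX.2 ▸ mem_univ x)).choose

theorem mem_index (hX : IsPartition X) (x : α) : x ∈ X (hX.index x) :=
  (mem_iUnion.1 (hX.2 ▸ mem_univ x)).choose_spec

theorem index_eq_of_mem (hX : IsPartition X) {x : α} {n : ℕ} (hx : x ∈ X n) :
    hX.index x = n := by
  by_contra hne
  exact (hX.1 _ _ hne).le_bot ⟨hX.mem_index x, hx⟩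

def selectorTree (hX : IsPartition X) : Set (List α) :=
  {s | (s.map hX.index).Nodup}

theorem isTree_selectorTree (hX : IsPartition X) : IsTree hX.selectorTree :=
  fun _ hs _ ht => (ht.sublist.map _).nodup hs

theorem append_singleton_mem_selectorTree (hX : IsPartition X) {s : List α} {x : α} :
    s ++ [x] ∈ hX.selectorTree ↔ hX.index x ∉ s.map hX.index ∧ s ∈ hX.selectorTree := by
  change ((s ++ [x]).map hX.index).Nodup ↔ _ ∧ (s.map hX.index).Nodup
  rw [List.map_append, List.map_singleton, ← List.concat_eq_append, List.nodup_concat]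

theorem compl_extensions_selectorTree_subset (hX : IsPartition X) {s : List α}
    (hs : s ∈ hX.selectorTree) :
    {x | s ++ [x] ∈ hX.selectorTree}ᶜ ⊆ ⋃ n ∈ s.map hX.index, X n := fun x hx => by
  have hxs : hX.index x ∈ s.map hX.index := by
    by_contra h
    exact hx (hX.append_singleton_mem_selectorTree.2 ⟨h, hs⟩)
  exact mem_biUnion hxs (hX.mem_index x)

theorem isSelector_range (hX : IsPartition X) {b : ℕ → α}
    (hb : Function.Injective (hX.index ∘ b)) : IsSelector X (range b) := by
  rintro n _ ⟨⟨i, rfl⟩, hi⟩ _ ⟨⟨j, rfl⟩, hj⟩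
  exact congrArg b (hb ((hX.index_eq_of_mem hi).trans (hX.index_eq_of_mem hj).symm))

end IsPartition

theorem List.injective_of_forall_nodup_map_range {β : Type*} {f : ℕ → β}
    (hf : ∀ k, ((List.range k).map f).Nodup) : Function.Injective f := fun i j hij =>
  List.inj_on_of_nodup_map (hf (max i j + 1)) (List.mem_range.2 (by omega))
    (List.mem_range.2 (by omega)) hij

theorem weaklyRamsey_locallySelective (I : Set (Set ℕ)) (hI : IsIdealOn I)
    (h : WeaklyRamsey I) : LocallySelective I := by
  intro X hX hXI
  have hram : ∀ s ∈ hX.selectorTree, {x | s ++ [x] ∈ hX.selectorTree}ᶜ ∈ I := fun s hs =>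
    hI.1 _ (hI.biUnion_list_mem _ fun n _ => hXI n) _ (hX.compl_extensions_selectorTree_subset hs)
  obtain ⟨b, hb, hbI⟩ := h hX.selectorTree List.nodup_nil hX.isTree_selectorTree hram
  have hinj : Function.Injective (hX.index ∘ b) :=
    List.injective_of_forall_nodup_map_range fun k => by rw [← List.map_map]; exact hb k
  exact ⟨range b, hX.isSelector_range hinj, hbI⟩
end

section
/- Let I be an ideal on X and A ∉ I. If the restriction I↾A = {B ∩ A : B ∈ I} is weakly Ramsey (as an ideal on A), then I is weakly Ramsey. -/
open Set

theorem IsTree.preimage_map {α β : Type*} {T : Set (List α)} (hT : IsTree T) (f : β → α) :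
    IsTree {s : List β | s.map f ∈ T} :=
  fun _ hs _ ht => hT _ hs _ (ht.map f)

/-- A branch of the pulled-back tree is mapped by `f` to a branch of the original one, and the
ramifications of the pulled-back tree are `f`-preimages of the original ones. -/
theorem WeaklyRamsey.of_comap {α β : Type*} {I : Set (Set α)}
    (hI : ∀ A ∈ I, ∀ B : Set α, B ⊆ A → B ∈ I) (f : β → α)
    (h : WeaklyRamsey {S : Set β | f '' S ∈ I}) : WeaklyRamsey I := by
  intro T hnil htree hram
  have hram' : ∀ s : List β, s.map f ∈ T → f '' {y | (s ++ [y]).map f ∈ T}ᶜ ∈ I := by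
    intro s hs
    refine hI _ (hram _ hs) _ ?_
    rintro _ ⟨y, hy, rfl⟩
    simpa using hy
  obtain ⟨b, hbranch, hpos⟩ := h _ (by simpa using hnil) (htree.preimage_map f) hram'
  refine ⟨f ∘ b, fun k => ?_, fun hc => hpos ?_⟩
  · simpa [List.map_map] using hbranch k
  · simpa [Set.range_comp] using hc

theorem weaklyRamsey_of_restriction_general {X : Type*}
    (I : Set (Set X)) (hI : IsIdealOn I) (A : Set X)
    (h : WeaklyRamsey {S : Set A | Subtype.val '' S ∈ I}) :
    WeaklyRamsey I :=
  WeaklyRamsey.of_comap hI.1 Subtype.val h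

theorem weaklyRamsey_of_restriction {X : Type*} [Countable X]
    (I : Set (Set X)) (hI : IsIdealOn I) (A : Set X) (hA : A ∉ I)
    (h : WeaklyRamsey {S : Set A | Subtype.val '' S ∈ I}) :
    WeaklyRamsey I :=
  weaklyRamsey_of_restriction_general I hI A h
end

section
/- The ideal ED↑ on ω×ω generated by vertical lines and graphs of nondecreasing functions from ω to ω is not weakly Ramsey. -/
open Set

/-!
Take the tree of finite sequences whose first coordinates increase strictly and whose second
coordinates increase weakly. After a node ending in `p`, the excluded points lie on the vertical
lines through `0, …, p.1` or the horizontal lines at heights `< p.2`, so every ramification is in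
`ED↑*`. Along a branch the second coordinate is a nondecreasing function of the (strictly
increasing) first coordinate, and such a partial function extends to a total nondecreasing one,
so the range of every branch lies in `ED↑`.
-/

theorem not_weaklyRamsey_of_isChain {α : Type*} {I : Set (Set α)} (R : α → α → Prop)
    (h_empty : ∅ ∈ I) (h_ram : ∀ p, {x | ¬ R p x} ∈ I)
    (h_branch : ∀ b : ℕ → α, (∀ k, R (b k) (b (k + 1))) → range b ∈ I) :
    ¬ WeaklyRamsey I := by
  have h_tree_ram : ∀ s ∈ {s : List α | s.IsChain R}, {x | s ++ [x] ∈ {s | s.IsChain R}}ᶜ ∈ I := by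
    intro s (hs : s.IsChain R)
    cases hlast : s.getLast? with
    | none =>
      convert h_empty
      simp [hs, List.isChain_append, hlast]
    | some p =>
      convert h_ram p using 1
      ext x
      simp [hs, List.isChain_append, hlast]
  intro h
  obtain ⟨b, hb, hpos⟩ := h {s | s.IsChain R} List.IsChain.nil
    (fun s hs t ht => List.IsChain.prefix hs ht) h_tree_ram
  refine hpos (h_branch b fun k => ?_)
  have hchain := hb (k + 2)
  rw [mem_ofPred_eq, List.isChain_map, List.isChain_range_succ] at hchain
  exact hchain k k.lt_succ_self

theorem Nat.exists_monotone_comp_eq {β : Type*} [Preorder β] {u : ℕ → ℕ} {v : ℕ → β}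
    (hu : StrictMono u) (hv : Monotone v) : ∃ f : ℕ → β, Monotone f ∧ ∀ k, f (u k) = v k := by
  classical
  -- `g n` is the last index `k ≤ n` with `u k ≤ n`, a monotone left inverse of `u`
  let g : ℕ → ℕ := fun n => Nat.findGreatest (fun k => u k ≤ n) n
  have hg_mono : Monotone g := fun m n hmn =>
    Nat.findGreatest_mono (fun _ hk => hk.trans hmn) hmn
  have hg_u : ∀ k, g (u k) = k := fun k =>
    Nat.findGreatest_eq_iff.2 ⟨hu.le_apply, fun _ => le_rfl,
      fun _ hkn _ => (hu.lt_iff_lt.2 hkn).not_ge⟩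
  exact ⟨v ∘ g, hv.comp hg_mono, fun k => congrArg v (hg_u k)⟩

theorem biUnion_mem_EDup {ι : Type*} (s : Finset ι) {S : ι → Set (ℕ × ℕ)}
    (hS : ∀ i ∈ s, EDgen (S i)) : (⋃ i ∈ s, S i) ∈ EDup := by
  classical
  refine ⟨s.image S, by simpa using hS, ?_⟩
  simp only [Finset.coe_image, sUnion_image, Finset.mem_coe, subset_refl]

theorem EDgen_vertical (i : ℕ) : EDgen {p : ℕ × ℕ | p.1 = i} := Or.inl ⟨i, rfl⟩

theorem EDgen_horizontal (k : ℕ) : EDgen {p : ℕ × ℕ | p.2 = k} :=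
  Or.inr ⟨fun _ => k, monotone_const, rfl⟩

theorem empty_mem_EDup : ∅ ∈ EDup := ⟨∅, by simp, empty_subset _⟩

theorem mem_EDup_of_subset {A B : Set (ℕ × ℕ)} (hAB : A ⊆ B) (hB : B ∈ EDup) : A ∈ EDup :=
  let ⟨C, hC, hBC⟩ := hB
  ⟨C, hC, hAB.trans hBC⟩

theorem union_mem_EDup {A B : Set (ℕ × ℕ)} (hA : A ∈ EDup) (hB : B ∈ EDup) : A ∪ B ∈ EDup := by
  classical
  obtain ⟨C₁, hC₁, hAC₁⟩ := hA
  obtain ⟨C₂, hC₂, hBC₂⟩ := hB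
  refine ⟨C₁ ∪ C₂, fun S hS => (Finset.mem_union.1 hS).elim (hC₁ S) (hC₂ S), ?_⟩
  rw [Finset.coe_union, sUnion_union]
  exact union_subset_union hAC₁ hBC₂

theorem setOf_not_lt_and_le_mem_EDup (p : ℕ × ℕ) :
    {x : ℕ × ℕ | ¬ (p.1 < x.1 ∧ p.2 ≤ x.2)} ∈ EDup := by
  refine mem_EDup_of_subset ?_ <| union_mem_EDup
    (biUnion_mem_EDup (Finset.range (p.1 + 1)) fun i _ => EDgen_vertical i)
    (biUnion_mem_EDup (Finset.range p.2) fun k _ => EDgen_horizontal k)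
  intro x (hx : ¬ (p.1 < x.1 ∧ p.2 ≤ x.2))
  simp only [mem_union, mem_iUnion, Finset.mem_range, mem_ofPred_eq, exists_prop, exists_eq_right']
  omega

theorem range_mem_EDup_of_strictMono_fst {b : ℕ → ℕ × ℕ} (hb₁ : StrictMono fun k => (b k).1)
    (hb₂ : Monotone fun k => (b k).2) : range b ∈ EDup := by
  obtain ⟨f, hf, hfb⟩ := Nat.exists_monotone_comp_eq hb₁ hb₂
  refine ⟨{{q | q.2 = f q.1}}, ?_, ?_⟩
  · simp only [Finset.mem_singleton, forall_eq]
    exact Or.inr ⟨f, hf, rfl⟩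
  rintro _ ⟨k, rfl⟩
  simpa using (hfb k).symm

theorem EDup_not_weaklyRamsey : ¬ WeaklyRamsey EDup :=
  not_weaklyRamsey_of_isChain (fun p q => p.1 < q.1 ∧ p.2 ≤ q.2) empty_mem_EDup
    setOf_not_lt_and_le_mem_EDup fun _ hb =>
      range_mem_EDup_of_strictMono_fst (strictMono_nat_of_lt_succ fun k => (hb k).1)
        (monotone_nat_of_le_succ fun k => (hb k).2)
end

section
/- The ideal ED↑ on ω×ω generated by vertical lines and graphs of nondecreasing functions is locally selective: every partition of ω×ω into sets belonging to ED↑ admits a selector not in ED↑. -/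
open Set

/-!
Colour ℕ × ℕ by the index of the piece containing each point. Call a finite antichain of the
product order (a strictly decreasing staircase) rainbow if its points have distinct colours.
A staircase meets every vertical line and every graph of a nondecreasing function in at most
one point, so a set containing arbitrarily large staircases is `ED↑`-positive.

The heart of the proof is that rainbow staircases of every length exist, avoiding any finite
set `F` of colours and lying above any height `β`. Inductively, suppose there is none of length
`ℓ + 1` for `F, β`, and pick rainbow staircases `c 0, c 1, …` of length `ℓ`, with `c n` above
height `β + n` and with pairwise disjoint colour sets. A point of height `≥ β` to the lower
right of `c n` whose colour is not in `F` would extend `c n` unless it repeats a colour of `c n`.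
Far to the right, below height `β + n`, a point lies to the lower right of both `c n` and
`c (n + 1)`, so its colour must be in `F`. Hence the union of the finitely many pieces with
colours in `F`, a set in `ED↑`, contains arbitrarily large staircases: a contradiction.

Taking rainbow staircases of lengths `1, 2, 3, …` with pairwise disjoint colour sets, their union
is a selector that is `ED↑`-positive.
-/

open Function

lemma IsPartition.exists_eq_preimage {α : Type*} {X : ℕ → Set α} (hX : IsPartition X) :
    ∃ col : α → ℕ, X = fun n => col ⁻¹' {n} := by
  have hcover : ∀ p, ∃ n, p ∈ X n := fun p => mem_iUnion.1 (hX.2 ▸ mem_univ p)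
  choose col hcol using hcover
  refine ⟨col, funext fun n => Set.ext fun p => ⟨fun hp => ?_, fun hp => hp ▸ hcol p⟩⟩
  by_contra hne
  exact Set.disjoint_left.1 (hX.1 _ _ hne) (hcol p) hp

lemma isSelector_preimage_of_injOn {α : Type*} {col : α → ℕ} {S : Set α} (h : InjOn col S) :
    IsSelector (fun n => col ⁻¹' {n}) S :=
  fun _ _ hp _ hq => h hp.1 hq.1 (hp.2.trans hq.2.symm)

lemma injOn_iUnion_of_pairwise_disjoint_image {α γ : Type*} [DecidableEq γ] {f : α → γ}
    {c : ℕ → Finset α} (hinj : ∀ n, InjOn f (c n))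
    (hdisj : Pairwise (Disjoint on fun n => (c n).image f)) :
    InjOn f (⋃ n, (c n : Set α)) := by
  intro p hp q hq hpq
  obtain ⟨m, hpm⟩ := mem_iUnion.1 hp
  obtain ⟨n, hqn⟩ := mem_iUnion.1 hq
  obtain rfl | hmn := eq_or_ne m n
  · exact hinj m hpm hqn hpq
  · exact absurd hpq <| Finset.disjoint_iff_ne.1 (hdisj hmn)
      _ (Finset.mem_image_of_mem f hpm) _ (Finset.mem_image_of_mem f hqn)

lemma exists_seq_pairwise_disjoint {β γ : Type*} (g : β → Finset γ) (P : ℕ → β → Prop)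
    (h : ∀ n (F : Finset γ), ∃ b, P n b ∧ Disjoint (g b) F) :
    ∃ c : ℕ → β, (∀ n, P n (c n)) ∧ Pairwise (Disjoint on (g ∘ c)) := by
  classical
  choose b hbP hbF using h
  let G : ℕ → Finset γ := fun n => Nat.rec ∅ (fun k acc => acc ∪ g (b k acc)) n
  have hG : ∀ n, G (n + 1) = G n ∪ g (b n (G n)) := fun _ => rfl
  have hmono : Monotone G :=
    monotone_nat_of_le_succ fun n => (hG n).symm ▸ Finset.subset_union_left
  have hlt : ∀ m n, m < n → Disjoint (g (b m (G m))) (g (b n (G n))) := fun m n hmn =>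
    ((hbF n (G n)).symm).mono_left <|
      (hG m ▸ Finset.subset_union_right).trans (hmono (Nat.succ_le_of_lt hmn))
  refine ⟨fun n => b n (G n), fun n => hbP n _, fun m n hmn => ?_⟩
  rcases hmn.lt_or_gt with h | h
  · exact hlt m n h
  · exact (hlt n m h).symm

lemma EDgen.inter_subsingleton_of_isAntichain {S s : Set (ℕ × ℕ)} (hS : EDgen S)
    (hs : IsAntichain (· ≤ ·) s) : (s ∩ S).Subsingleton := by
  rintro p ⟨hps, hpS⟩ q ⟨hqs, hqS⟩
  have hcomp : p ≤ q ∨ q ≤ p := by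
    rcases hS with ⟨i, rfl⟩ | ⟨f, hf, rfl⟩
    · simp only [mem_ofPred_eq] at hpS hqS
      rcases le_total p.2 q.2 with h | h
      · exact Or.inl ⟨(hpS.trans hqS.symm).le, h⟩
      · exact Or.inr ⟨(hqS.trans hpS.symm).le, h⟩
    · simp only [mem_ofPred_eq] at hpS hqS
      rcases le_total p.1 q.1 with h | h
      · exact Or.inl ⟨h, hpS ▸ hqS ▸ hf h⟩
      · exact Or.inr ⟨h, hqS ▸ hpS ▸ hf h⟩
  rcases hcomp with h | h
  · exact hs.eq hps hqs h
  · exact (hs.eq hqs hps h).symm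

lemma notMem_EDup_of_forall_exists_antichain {U : Set (ℕ × ℕ)}
    (h : ∀ k, ∃ s : Finset (ℕ × ℕ), IsAntichain (· ≤ ·) (s : Set (ℕ × ℕ)) ∧ ↑s ⊆ U ∧ k ≤ s.card) :
    U ∉ EDup := by
  rintro ⟨C, hgen, hUC⟩
  obtain ⟨s, hs, hsU, hcard⟩ := h (C.card + 1)
  have : s.card ≤ C.card :=
    Finset.card_le_card_of_forall_subsingleton (· ∈ ·) (fun p hp => hUC (hsU hp))
      fun S hS => ((hgen S hS).inter_subsingleton_of_isAntichain hs).anti fun p hp => hp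
  omega

lemma preimage_finset_mem_EDup {col : ℕ × ℕ → ℕ} (hcol : ∀ n, col ⁻¹' {n} ∈ EDup)
    (F : Finset ℕ) : col ⁻¹' ↑F ∈ EDup := by
  classical
  choose C hgen hcover using hcol
  refine ⟨F.biUnion C, fun S hS => ?_, fun p hp => ?_⟩
  · obtain ⟨n, -, hS⟩ := Finset.mem_biUnion.1 hS
    exact hgen n S hS
  · obtain ⟨S, hS, hpS⟩ := hcover (col p) rfl
    exact ⟨S, Finset.mem_biUnion.2 ⟨col p, hp, hS⟩, hpS⟩

lemma exists_isAntichain_card_eq (a b k : ℕ) :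
    ∃ s : Finset (ℕ × ℕ), IsAntichain (· ≤ ·) (s : Set (ℕ × ℕ)) ∧ s.card = k ∧
      ∀ p ∈ s, a < p.1 ∧ b ≤ p.2 ∧ p.2 < b + k := by
  have hinj : Function.Injective fun j : ℕ => ((a + 1 + j, b + k - 1 - j) : ℕ × ℕ) :=
    fun i j hij => by simp only [Prod.mk.injEq] at hij; omega
  refine ⟨(Finset.range k).image _, ?_, by rw [Finset.card_image_of_injective _ hinj,
    Finset.card_range], ?_⟩
  · simp only [Finset.coe_image, Finset.coe_range]
    rintro _ ⟨i, hi, rfl⟩ _ ⟨j, hj, rfl⟩ hij ⟨h1, h2⟩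
    simp only [mem_Iio] at hi hj
    simp only at h1 h2 hij
    exact hij (by congr 2 <;> omega)
  · simp only [Finset.mem_image, Finset.mem_range]
    rintro _ ⟨j, hj, rfl⟩
    omega

def IsRainbowAntichain (col : ℕ × ℕ → ℕ) (s : Finset (ℕ × ℕ)) : Prop :=
  IsAntichain (· ≤ ·) (s : Set (ℕ × ℕ)) ∧ InjOn col s

lemma IsRainbowAntichain.insert {col : ℕ × ℕ → ℕ} {s : Finset (ℕ × ℕ)} {p : ℕ × ℕ}
    (hs : IsRainbowAntichain col s) (hp : ∀ q ∈ s, q.1 < p.1 ∧ p.2 < q.2)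
    (hcol : col p ∉ s.image col) : IsRainbowAntichain col (insert p s) := by
  have hps : p ∉ s := fun h => (hp p h).1.false
  rw [IsRainbowAntichain, Finset.coe_insert]
  refine ⟨hs.1.insert (fun q hq _ hqp => ?_) (fun q hq _ hpq => ?_), ?_⟩
  · exact (hp q hq).2.not_ge hqp.2
  · exact (hp q hq).1.not_ge hpq.1
  · rw [injOn_insert (by exact_mod_cast hps)]
    exact ⟨hs.2, by simpa using hcol⟩

lemma exists_rainbowAntichain_succ {col : ℕ × ℕ → ℕ} (hcol : ∀ n, col ⁻¹' {n} ∈ EDup) {ℓ : ℕ}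
    (ih : ∀ (F : Finset ℕ) (β : ℕ), ∃ s, IsRainbowAntichain col s ∧ s.card = ℓ ∧
      Disjoint (s.image col) F ∧ ∀ p ∈ s, β ≤ p.2)
    (F : Finset ℕ) (β : ℕ) : ∃ s, IsRainbowAntichain col s ∧ s.card = ℓ + 1 ∧
      Disjoint (s.image col) F ∧ ∀ p ∈ s, β ≤ p.2 := by
  by_contra hnone
  obtain ⟨c, hc, hdisj⟩ := exists_seq_pairwise_disjoint (fun s => s.image col)
    (fun n s => IsRainbowAntichain col s ∧ s.card = ℓ ∧ Disjoint (s.image col) F ∧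
      ∀ p ∈ s, β + n ≤ p.2)
    fun n G => by
      obtain ⟨s, hs, hcard, hFG, hβ⟩ := ih (F ∪ G) (β + n)
      rw [Finset.disjoint_union_right] at hFG
      exact ⟨s, ⟨hs, hcard, hFG.1, hβ⟩, hFG.2⟩
  have hrepeat : ∀ n p, (∀ q ∈ c n, q.1 < p.1 ∧ p.2 < q.2) → β ≤ p.2 → col p ∉ F →
      col p ∈ (c n).image col := by
    intro n p hp hβ hF
    by_contra hnew
    obtain ⟨hs, hcard, hFs, hβs⟩ := hc n
    refine hnone ⟨insert p (c n), hs.insert hp hnew, ?_, ?_, ?_⟩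
    · rw [Finset.card_insert_of_notMem fun h => (hp p h).1.false, hcard]
    · rw [Finset.image_insert, Finset.disjoint_insert_left]
      exact ⟨hF, hFs⟩
    · simp only [Finset.mem_insert, forall_eq_or_imp]
      exact ⟨hβ, fun q hq => (Nat.le_add_right β n).trans (hβs q hq)⟩
  have hstaircase : ∀ k, ∃ s : Finset (ℕ × ℕ), IsAntichain (· ≤ ·) (s : Set (ℕ × ℕ)) ∧
      ↑s ⊆ col ⁻¹' ↑F ∧ k ≤ s.card := by
    intro k
    obtain ⟨s, hs, hcard, hbox⟩ :=
      exists_isAntichain_card_eq ((c k ∪ c (k + 1)).sup Prod.fst) β k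
    refine ⟨s, hs, fun p hp => ?_, hcard.ge⟩
    by_contra hpF
    obtain ⟨hright, hβ, hlow⟩ := hbox p hp
    have hbelow : ∀ n, n = k ∨ n = k + 1 → col p ∈ (c n).image col := by
      refine fun n hn => hrepeat n p (fun q hq => ?_) hβ hpF
      have hqk : q ∈ c k ∪ c (k + 1) := by rcases hn with rfl | rfl <;> simp [hq]
      have := Finset.le_sup (f := Prod.fst) hqk
      have := (hc n).2.2.2 q hq
      omega
    exact Finset.disjoint_left.1 (hdisj (Nat.lt_succ_self k).ne)
      (hbelow k (Or.inl rfl)) (hbelow (k + 1) (Or.inr rfl))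
  exact notMem_EDup_of_forall_exists_antichain hstaircase (preimage_finset_mem_EDup hcol F)

theorem exists_rainbowAntichain {col : ℕ × ℕ → ℕ} (hcol : ∀ n, col ⁻¹' {n} ∈ EDup) (k : ℕ)
    (F : Finset ℕ) (β : ℕ) : ∃ s, IsRainbowAntichain col s ∧ s.card = k ∧
      Disjoint (s.image col) F ∧ ∀ p ∈ s, β ≤ p.2 := by
  induction k generalizing F β with
  | zero => exact ⟨∅, by simp [IsRainbowAntichain], rfl, by simp, by simp⟩
  | succ ℓ ih => exact exists_rainbowAntichain_succ hcol ih F β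

theorem EDup_locallySelective : LocallySelective EDup := by
  intro X hX hXI
  obtain ⟨col, rfl⟩ := hX.exists_eq_preimage
  obtain ⟨c, hc, hdisj⟩ := exists_seq_pairwise_disjoint (fun s => s.image col)
    (fun n s => IsRainbowAntichain col s ∧ n ≤ s.card)
    fun n F => by
      obtain ⟨s, hs, hcard, hF, -⟩ := exists_rainbowAntichain hXI n F 0
      exact ⟨s, ⟨hs, hcard.ge⟩, hF⟩
  refine ⟨⋃ n, (c n : Set (ℕ × ℕ)), isSelector_preimage_of_injOn ?_, ?_⟩
  · exact injOn_iUnion_of_pairwise_disjoint_image (fun n => (hc n).1.2) hdisj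
  · exact notMem_EDup_of_forall_exists_antichain fun k =>
      ⟨c k, (hc k).1.1, subset_iUnion (fun n => (c n : Set (ℕ × ℕ))) k, (hc k).2⟩
end

section
/- The ideal WR does not contain an isomorphic copy of ED↑: there is no bijection σ: ω×ω → ω×ω such that σ⁻¹[A] ∈ WR for every A ∈ ED↑. Consequently WR and ED↑ are not ⊑-equivalent. -/
/-!
Call a set `F ⊆ ω × ω` linked if `p.1 ≤ q.1 + q.2` for all `p, q ∈ F`. A generator of `WR` of the
second kind meets a linked set in at most one point, and a vertical line misses every point far
enough to the right, so a set containing arbitrarily large linked finite sets arbitrarily far to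
the right is `WR`-positive. Every subset of a single column is linked.

Given a bijection `σ`, the image of each column either meets some vertical line infinitely often,
meets some horizontal line infinitely often, or is unbounded in both coordinates at once. If one
line (an `ED↑` set) is met infinitely often by infinitely many columns, its preimage is
`WR`-positive. Otherwise, above any given point, there are large linked sets far to the right
whose images are increasing chains (strictly in the first coordinate, weakly in the second).
Stacking countably many such chains, each above the previous one, yields the graph of a
nondecreasing function whose preimage is `WR`-positive.
-/


open Set

open Function

def WRLinked (F : Set (ℕ × ℕ)) : Prop := ∀ p ∈ F, ∀ q ∈ F, p.1 ≤ q.1 + q.2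

theorem WRgen2.subsingleton_inter {S F : Set (ℕ × ℕ)} (hS : WRgen2 S) (hF : WRLinked F) :
    (S ∩ F).Subsingleton := by
  rintro p ⟨hpS, hpF⟩ q ⟨hqS, hqF⟩
  by_contra hpq
  have := hF p hpF q hqF
  have := hF q hqF p hpF
  rcases hS p hpS q hqS hpq with h | h <;> omega

theorem exists_bound_of_WRgen1 (C : Finset (Set (ℕ × ℕ))) :
    ∃ B, ∀ S ∈ C, WRgen1 S → ∀ p ∈ S, p.1 ≤ B := by
  have hline : Injective fun i : ℕ => {p : ℕ × ℕ | p.1 = i} := fun i _ hij =>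
    (Set.ext_iff.mp hij (i, 0)).mp rfl
  obtain ⟨B, hB⟩ := (C.finite_toSet.preimage hline.injOn).bddAbove
  exact ⟨B, by rintro S hS ⟨i, rfl⟩ p rfl; exact hB hS⟩

theorem notMem_WR_of_forall_exists_linked {Y : Set (ℕ × ℕ)}
    (h : ∀ n, ∃ F : Finset (ℕ × ℕ), ↑F ⊆ Y ∧ WRLinked F ∧ n ≤ F.card ∧ ∀ p ∈ F, n ≤ p.1) :
    Y ∉ WR := by
  rintro ⟨C, hC, hYC⟩
  obtain ⟨B, hB⟩ := exists_bound_of_WRgen1 C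
  obtain ⟨F, hFY, hF, hcard, hfar⟩ := h (B + C.card + 1)
  have hcover : ∀ p, ∃ S, p ∈ F → S ∈ C ∧ p ∈ S := fun p => by
    by_cases hp : p ∈ F
    · obtain ⟨S, hS, hpS⟩ := hYC (hFY hp)
      exact ⟨S, fun _ => ⟨hS, hpS⟩⟩
    · exact ⟨∅, fun h => absurd h hp⟩
  choose G hG using hcover
  have hgen2 : ∀ p ∈ F, WRgen2 (G p) := fun p hp =>
    (hC _ (hG p hp).1).resolve_left fun hline => by
      have := hB _ (hG p hp).1 hline p (hG p hp).2
      have := hfar p hp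
      omega
  have : F.card ≤ C.card := Finset.card_le_card_of_injOn G (fun p hp => (hG p hp).1)
    fun p hp q hq hpq => (hgen2 p hp).subsingleton_inter hF ⟨(hG p hp).2, hp⟩ ⟨hpq ▸ (hG q hq).2, hq⟩
  omega

theorem notMem_WR_of_infinite_columns {Y : Set (ℕ × ℕ)}
    (h : {c | {d | (c, d) ∈ Y}.Infinite}.Infinite) : Y ∉ WR := by
  refine notMem_WR_of_forall_exists_linked fun n => ?_
  obtain ⟨c, hc, hcn⟩ := h.exists_gt n
  obtain ⟨t, htY, rfl⟩ := hc.exists_subset_card_eq n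
  refine ⟨t.image (Prod.mk c), ?_, ?_, ?_, ?_⟩
  · rw [Finset.coe_image, Set.image_subset_iff]
    exact htY
  · simp [WRLinked]
  · rw [Finset.card_image_of_injective _ (Prod.mk_right_injective c)]
  · simpa using fun _ _ => hcn.le

def IsMonotoneChain (Z : Set (ℕ × ℕ)) : Prop := ∀ a ∈ Z, ∀ b ∈ Z, a.1 ≤ b.1 → a.2 ≤ b.2

theorem IsMonotoneChain.exists_monotone {Z : Set (ℕ × ℕ)} (hZ : IsMonotoneChain Z) :
    ∃ f : ℕ → ℕ, Monotone f ∧ Z ⊆ {p | p.2 = f p.1} := by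
  have hbdd : ∀ x, BddAbove (Prod.snd '' {a ∈ Z | a.1 ≤ x}) := fun x => by
    refine (Set.Finite.image _ ?_).bddAbove
    refine Set.Finite.of_finite_image ((finite_Iic x).subset ?_) (f := Prod.fst) ?_
    · rintro _ ⟨a, ha, rfl⟩
      exact ha.2
    · intro a ha b hb hab
      exact Prod.ext hab (le_antisymm (hZ a ha.1 b hb.1 hab.le) (hZ b hb.1 a ha.1 hab.ge))
  refine ⟨fun x => sSup (Prod.snd '' {a ∈ Z | a.1 ≤ x}),
    fun x y hxy => csSup_le_csSup' (hbdd y) (image_mono fun a ha => ⟨ha.1, ha.2.trans hxy⟩),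
    fun a ha => le_antisymm (le_csSup (hbdd a.1) ⟨a, ⟨ha, le_rfl⟩, rfl⟩) (csSup_le' ?_)⟩
  rintro _ ⟨b, hb, rfl⟩
  exact hZ b hb.1 a ha hb.2

theorem exists_monotone_of_chains (S : ℕ → ℕ × ℕ → Set (ℕ × ℕ)) (hfin : ∀ n q, (S n q).Finite)
    (hS : ∀ n q, IsMonotoneChain (S n q)) (hq : ∀ n q, ∀ a ∈ S n q, q ≤ a) :
    ∃ f : ℕ → ℕ, Monotone f ∧ ∀ n, ∃ q, S n q ⊆ {p | p.2 = f p.1} := by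
  choose ub hub using fun n q => (hfin n q).bddAbove
  -- each stage starts strictly to the right of, and weakly above, everything chosen before it
  let b : ℕ → ℕ × ℕ := fun m =>
    Nat.rec 0 (fun m bm => ((bm ⊔ ub m bm).1 + 1, (bm ⊔ ub m bm).2)) m
  have hb : Monotone b := monotone_nat_of_le_succ fun m => by
    change b m ≤ ((b m ⊔ ub m (b m)).1 + 1, (b m ⊔ ub m (b m)).2)
    have := le_sup_left (a := b m) (b := ub m (b m))
    rw [Prod.le_def] at this ⊢
    simp only at this ⊢
    omega
  have hsep : ∀ m m', m < m' → ∀ a ∈ S m (b m), ∀ a' ∈ S m' (b m'), a.1 < a'.1 ∧ a.2 ≤ a'.2 := by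
    intro m m' hmm' a ha a' ha'
    have h1 : a ≤ b m ⊔ ub m (b m) := le_sup_of_le_right (hub m (b m) ha)
    have h2 : b (m + 1) ≤ a' := (hb hmm').trans (hq m' (b m') a' ha')
    change ((b m ⊔ ub m (b m)).1 + 1, (b m ⊔ ub m (b m)).2) ≤ a' at h2
    rw [Prod.le_def] at h1 h2
    simp only at h2
    omega
  have hZ : IsMonotoneChain (⋃ m, S m (b m)) := by
    simp only [IsMonotoneChain, mem_iUnion]
    rintro a ⟨m, ha⟩ a' ⟨m', ha'⟩ hle
    rcases lt_trichotomy m m' with hlt | rfl | hgt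
    · exact (hsep m m' hlt a ha a' ha').2
    · exact hS m (b m) a ha a' ha' hle
    · exact absurd hle (not_le.mpr (hsep m' m hgt a' ha' a ha).1)
  obtain ⟨f, hf, hZf⟩ := hZ.exists_monotone
  exact ⟨f, hf, fun n => ⟨b n, (subset_iUnion (fun m => S m (b m)) n).trans hZf⟩⟩

def HasLinkedChains (σ : ℕ × ℕ → ℕ × ℕ) : Prop :=
  ∀ n (q : ℕ × ℕ), ∃ u : ℕ → ℕ × ℕ, q ≤ σ (u 0) ∧ StrictMono (fun j => (σ (u j)).1) ∧
    Monotone (fun j => (σ (u j)).2) ∧ ∀ j < n, n ≤ (u j).1 ∧ ∀ k < n, (u j).1 ≤ (u k).1 + (u k).2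

theorem HasLinkedChains.exists_monotone_preimage_notMem_WR {σ : ℕ × ℕ → ℕ × ℕ}
    (h : HasLinkedChains σ) : ∃ f : ℕ → ℕ, Monotone f ∧ σ ⁻¹' {p | p.2 = f p.1} ∉ WR := by
  choose u hq hfst hsnd hlink using h
  have hmono : ∀ n q j k, j ≤ k → σ (u n q j) ≤ σ (u n q k) := fun n q j k hjk =>
    ⟨(hfst n q).monotone hjk, hsnd n q hjk⟩
  obtain ⟨f, hf, hgraph⟩ := exists_monotone_of_chains (fun n q => (σ ∘ u n q) '' Iio n)
    (fun n q => (finite_Iio n).image _)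
    (by
      rintro n q _ ⟨j, -, rfl⟩ _ ⟨k, -, rfl⟩ hjk
      exact (hmono n q j k ((hfst n q).le_iff_le.mp hjk)).2)
    (by
      rintro n q _ ⟨j, -, rfl⟩
      exact (hq n q).trans (hmono n q 0 j j.zero_le))
  refine ⟨f, hf, notMem_WR_of_forall_exists_linked fun n => ?_⟩
  obtain ⟨q, hnq⟩ := hgraph n
  have hinj : Injective (u n q) := (hfst n q).injective.of_comp (f := fun p => (σ p).1)
  refine ⟨(Finset.range n).image (u n q), ?_, ?_, ?_, ?_⟩
  · rw [Finset.coe_image, Finset.coe_range, ← image_subset_iff, ← image_comp]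
    exact hnq
  · simp only [WRLinked, Finset.coe_image, Finset.coe_range, forall_mem_image, mem_Iio]
    exact fun j hj k hk => (hlink n q j hj).2 k hk
  · rw [Finset.card_image_of_injective _ hinj, Finset.card_range]
  · simp only [Finset.mem_image, Finset.mem_range, forall_exists_index, and_imp]
    rintro _ j hj rfl
    exact (hlink n q j hj).1

theorem exists_seq_of_forall_exists_succ {α : Type*} {P : ℕ → α → Prop} {R : α → α → Prop}
    (h0 : ∃ a, P 0 a) (h : ∀ j a, P j a → ∃ b, P (j + 1) b ∧ R a b) :
    ∃ u : ℕ → α, ∀ j, P j (u j) ∧ R (u j) (u (j + 1)) := by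
  choose next hnextP hnextR using h
  obtain ⟨a₀, ha₀⟩ := h0
  let v : ∀ j, {a // P j a} := fun j =>
    Nat.rec ⟨a₀, ha₀⟩ (fun j a => ⟨next j a a.2, hnextP j a a.2⟩) j
  exact ⟨fun j => (v j).1, fun j => ⟨(v j).2, hnextR j (v j).1 (v j).2⟩⟩

theorem infinite_setOf_exists_ge {P : ℕ → ℕ → Prop} (h : {c | ∃ i, P c i}.Infinite)
    (hfin : ∀ i, {c | P c i}.Finite) (x : ℕ) : {c | ∃ i, x ≤ i ∧ P c i}.Infinite := by
  refine (h.sdiff ((finite_Iio x).biUnion fun i _ => hfin i)).mono ?_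
  rintro c ⟨⟨i, hi⟩, hc⟩
  simp only [mem_iUnion, mem_Iio, mem_ofPred_eq, not_exists] at hc
  exact ⟨i, not_lt.mp fun hix => hc i hix hi, hi⟩

theorem fiber_trichotomy (g : ℕ → ℕ × ℕ) :
    (∃ i, {d | (g d).1 = i}.Infinite) ∨ (∃ w, {d | (g d).2 = w}.Infinite) ∨ ∀ q, ∃ d, q ≤ g d := by
  by_contra! hcon
  obtain ⟨hfst, hsnd, q, hq⟩ := hcon
  refine infinite_univ ((((finite_Iio q.1).biUnion fun i _ => hfst i).union
    ((finite_Iio q.2).biUnion fun w _ => hsnd w)).subset fun d _ => ?_)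
  have := hq d
  rw [Prod.le_def, not_and_or, not_le, not_le] at this
  simp only [mem_union, mem_iUnion, mem_Iio, mem_ofPred_eq, exists_prop, exists_eq_right']
  exact this

theorem Function.Injective.exists_snd_ge {g : ℕ → ℕ × ℕ} (hg : Injective g) {i : ℕ}
    (h : {d | (g d).1 = i}.Infinite) (y D : ℕ) : ∃ d, D ≤ d ∧ (g d).1 = i ∧ y ≤ (g d).2 := by
  have hinj : InjOn (fun d => (g d).2) ({d | (g d).1 = i} \ Iio D) :=
    fun a ha b hb hab => hg (Prod.ext (ha.1.trans hb.1.symm) hab)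
  obtain ⟨_, ⟨d, ⟨hdi, hdD⟩, rfl⟩, hy⟩ := ((h.sdiff (finite_Iio D)).image hinj).exists_gt y
  exact ⟨d, not_lt.mp hdD, hdi, hy.le⟩

theorem Function.Injective.exists_fst_ge {g : ℕ → ℕ × ℕ} (hg : Injective g) {w : ℕ}
    (h : {d | (g d).2 = w}.Infinite) (x : ℕ) : ∃ d, (g d).2 = w ∧ x ≤ (g d).1 := by
  have hinj : InjOn (fun d => (g d).1) {d | (g d).2 = w} :=
    fun a ha b hb hab => hg (Prod.ext hab (ha.trans hb.symm))
  obtain ⟨_, ⟨d, hdw, rfl⟩, hx⟩ := (h.image hinj).exists_gt x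
  exact ⟨d, hdw, hx.le⟩

section Columns

variable {σ : ℕ × ℕ → ℕ × ℕ}

theorem hasLinkedChains_of_column_chains
    (h : ∀ n (q : ℕ × ℕ), ∃ c, n ≤ c ∧ ∃ e : ℕ → ℕ, q ≤ σ (c, e 0) ∧
      StrictMono (fun j => (σ (c, e j)).1) ∧ Monotone (fun j => (σ (c, e j)).2)) :
    HasLinkedChains σ := by
  intro n q
  obtain ⟨c, hcn, e, hq, hfst, hsnd⟩ := h n q
  exact ⟨fun j => (c, e j), hq, hfst, hsnd, fun _ _ => ⟨hcn, fun k _ => c.le_add_right (e k)⟩⟩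

theorem hasLinkedChains_of_infinite_unbounded_columns
    (h : {c | ∀ q, ∃ d, q ≤ σ (c, d)}.Infinite) : HasLinkedChains σ := by
  refine hasLinkedChains_of_column_chains fun n q => ?_
  obtain ⟨c, hc, hcn⟩ := h.exists_gt n
  obtain ⟨e, he⟩ := exists_seq_of_forall_exists_succ (P := fun _ d => q ≤ σ (c, d))
    (R := fun d d' => (σ (c, d)).1 < (σ (c, d')).1 ∧ (σ (c, d)).2 ≤ (σ (c, d')).2) (hc q)
    fun _ d hd => by
      obtain ⟨d', hd'⟩ := hc ((σ (c, d)).1 + 1, (σ (c, d)).2)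
      rw [Prod.le_def] at hd hd'
      simp only at hd'
      exact ⟨d', Prod.le_def.mpr ⟨by omega, by omega⟩, by omega, hd'.2⟩
  exact ⟨c, hcn.le, e, (he 0).1, strictMono_nat_of_lt_succ fun j => (he j).2.1,
    monotone_nat_of_le_succ fun j => (he j).2.2⟩

theorem hasLinkedChains_of_snd_fibers (hσ : Injective σ)
    (h : {c | ∃ w, {d | (σ (c, d)).2 = w}.Infinite}.Infinite)
    (hfin : ∀ w, {c | {d | (σ (c, d)).2 = w}.Infinite}.Finite) : HasLinkedChains σ := by
  refine hasLinkedChains_of_column_chains fun n q => ?_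
  obtain ⟨c, ⟨w, hwq, hw⟩, hcn⟩ := (infinite_setOf_exists_ge h hfin q.2).exists_gt n
  have hg : Injective fun d => σ (c, d) := hσ.comp (Prod.mk_right_injective c)
  obtain ⟨e, he⟩ := exists_seq_of_forall_exists_succ
    (P := fun _ d => (σ (c, d)).2 = w ∧ q.1 ≤ (σ (c, d)).1)
    (R := fun d d' => (σ (c, d)).1 < (σ (c, d')).1) (hg.exists_fst_ge hw q.1) fun _ d hd => by
      obtain ⟨d', hd'w, hd'⟩ := hg.exists_fst_ge hw ((σ (c, d)).1 + 1)
      exact ⟨d', ⟨hd'w, by omega⟩, by omega⟩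
  refine ⟨c, hcn.le, e, ⟨(he 0).1.2, (he 0).1.1 ▸ hwq⟩, strictMono_nat_of_lt_succ fun j => (he j).2,
    fun j k _ => ?_⟩
  simp only [(he j).1.1, (he k).1.1, le_rfl]

theorem hasLinkedChains_of_fst_fibers (hσ : Injective σ)
    (h : {c | ∃ i, {d | (σ (c, d)).1 = i}.Infinite}.Infinite)
    (hfin : ∀ i, {c | {d | (σ (c, d)).1 = i}.Infinite}.Finite) : HasLinkedChains σ := by
  intro n q
  have hbig := infinite_setOf_exists_ge h hfin
  obtain ⟨col, hcol⟩ := exists_seq_of_forall_exists_succ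
    (P := fun _ (ci : ℕ × ℕ) => n ≤ ci.1 ∧ q.1 ≤ ci.2 ∧ {d | (σ (ci.1, d)).1 = ci.2}.Infinite)
    (R := fun (ci ci' : ℕ × ℕ) => ci.2 < ci'.2)
    (by
      obtain ⟨c, ⟨i, hi, hci⟩, hcn⟩ := (hbig q.1).exists_gt n
      exact ⟨(c, i), hcn.le, hi, hci⟩)
    fun _ ci _ => by
      obtain ⟨c, ⟨i, hi, hci'⟩, hcn⟩ := (hbig (ci.2 + 1)).exists_gt n
      exact ⟨(c, i), ⟨hcn.le, by omega, hci'⟩, by omega⟩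
  -- taking all rows above the first `n` columns makes the first `n` points linked
  set D := (Finset.range n).sup fun j => (col j).1
  have hg : ∀ c, Injective fun d => σ (c, d) := fun c => hσ.comp (Prod.mk_right_injective c)
  obtain ⟨u, hu⟩ := exists_seq_of_forall_exists_succ
    (P := fun j p => p.1 = (col j).1 ∧ (σ p).1 = (col j).2 ∧ D ≤ p.2 ∧ q.2 ≤ (σ p).2)
    (R := fun p p' => (σ p).2 ≤ (σ p').2)
    (by
      obtain ⟨d, hD, hd, hy⟩ := (hg _).exists_snd_ge (hcol 0).1.2.2 q.2 D
      exact ⟨((col 0).1, d), rfl, hd, hD, hy⟩)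
    fun j p _ => by
      obtain ⟨d, hD, hd, hy⟩ := (hg _).exists_snd_ge (hcol (j + 1)).1.2.2 (max q.2 (σ p).2) D
      exact ⟨((col (j + 1)).1, d), ⟨rfl, hd, hD, le_of_max_le_left hy⟩, le_of_max_le_right hy⟩
  refine ⟨u, ?_, strictMono_nat_of_lt_succ fun j => ?_, monotone_nat_of_le_succ fun j => (hu j).2,
    fun j hj => ⟨(hu j).1.1 ▸ (hcol j).1.1, fun k _ => ?_⟩⟩
  · exact ⟨(hu 0).1.2.1 ▸ (hcol 0).1.2.1, (hu 0).1.2.2.2⟩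
  · rw [(hu j).1.2.1, (hu (j + 1)).1.2.1]
    exact (hcol j).2
  · calc (u j).1 = (col j).1 := (hu j).1.1
      _ ≤ D := Finset.le_sup (f := fun j => (col j).1) (Finset.mem_range.mpr hj)
      _ ≤ (u k).2 := (hu k).1.2.2.1
      _ ≤ (u k).1 + (u k).2 := Nat.le_add_left _ _

theorem hasLinkedChains_of_finite_fibers (hσ : Injective σ)
    (hfst : ∀ i, {c | {d | (σ (c, d)).1 = i}.Infinite}.Finite)
    (hsnd : ∀ w, {c | {d | (σ (c, d)).2 = w}.Infinite}.Finite) : HasLinkedChains σ := by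
  have hcover : univ ⊆ {c | ∃ i, {d | (σ (c, d)).1 = i}.Infinite} ∪
      {c | ∃ w, {d | (σ (c, d)).2 = w}.Infinite} ∪ {c | ∀ q, ∃ d, q ≤ σ (c, d)} :=
    fun c _ => by simpa only [mem_union, mem_ofPred_eq, or_assoc] using fiber_trichotomy _
  rcases infinite_union.mp (infinite_univ.mono hcover) with h | h
  · rcases infinite_union.mp h with h | h
    · exact hasLinkedChains_of_fst_fibers hσ h hfst
    · exact hasLinkedChains_of_snd_fibers hσ h hsnd
  · exact hasLinkedChains_of_infinite_unbounded_columns h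

theorem exists_EDgen_preimage_notMem_WR (hσ : Injective σ) : ∃ A, EDgen A ∧ σ ⁻¹' A ∉ WR := by
  by_cases hfst : ∃ i, {c | {d | (σ (c, d)).1 = i}.Infinite}.Infinite
  · obtain ⟨i, hi⟩ := hfst
    exact ⟨{p | p.1 = i}, Or.inl ⟨i, rfl⟩, notMem_WR_of_infinite_columns hi⟩
  by_cases hsnd : ∃ w, {c | {d | (σ (c, d)).2 = w}.Infinite}.Infinite
  · obtain ⟨w, hw⟩ := hsnd
    exact ⟨{p | p.2 = w}, Or.inr ⟨fun _ => w, monotone_const, rfl⟩,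
      notMem_WR_of_infinite_columns hw⟩
  simp only [not_exists, not_infinite] at hfst hsnd
  obtain ⟨f, hf, hWR⟩ :=
    (hasLinkedChains_of_finite_fibers hσ hfst hsnd).exists_monotone_preimage_notMem_WR
  exact ⟨_, Or.inr ⟨f, hf, rfl⟩, hWR⟩

end Columns

theorem EDup_not_sub_WR :
    (¬ ∃ σ : (ℕ × ℕ) ≃ (ℕ × ℕ), ∀ A ∈ EDup, ⇑σ ⁻¹' A ∈ WR) ∧
    ¬ ((∃ f : (ℕ × ℕ) ≃ (ℕ × ℕ), ∀ A ∈ WR, ⇑f ⁻¹' A ∈ EDup) ∧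
       (∃ g : (ℕ × ℕ) ≃ (ℕ × ℕ), ∀ A ∈ EDup, ⇑g ⁻¹' A ∈ WR)) := by
  have hnot : ¬ ∃ σ : (ℕ × ℕ) ≃ (ℕ × ℕ), ∀ A ∈ EDup, ⇑σ ⁻¹' A ∈ WR := by
    rintro ⟨σ, hσ⟩
    obtain ⟨A, hA, hWR⟩ := exists_EDgen_preimage_notMem_WR σ.injective
    exact hWR (hσ A ⟨{A}, by simpa using hA, by simp⟩)
  exact ⟨hnot, fun h => hnot h.2⟩
end
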